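/- arXiv:2504.03937 — 15 statements merged into one kernel-verified Lean document; each statement's English description precedes it below -/
import Mathlib

section
/- Let T be a 2×2×2 real tensor. If Δ(T) > 0, then rank(T) = 2. -/
/-- A `2 × 2 × 2` real tensor. -/
abbrev Tensor222 : Type := Fin 2 → Fin 2 → Fin 2 → ℝ

/-- The rank of a `2 × 2 × 2` tensor: the least `r` such that `T` is a sum of
`r` rank-one tensors. -/
noncomputable def tensorRank (T : Tensor222) : ℕ :=
  sInf {r : ℕ | ∃ a b c : Fin r → Fin 2 → ℝ,
    T = fun i j k => ∑ l, a l i * b l j * c l k}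
/-- Cayley's hyperdeterminant of a `2 × 2 × 2` tensor (indices `0,1` for `1,2`). -/
def hdet (T : Tensor222) : ℝ :=
  (T 0 0 0 * T 1 1 1 + T 0 0 1 * T 1 1 0 - T 0 1 0 * T 1 0 1 - T 0 1 1 * T 1 0 0) ^ 2
    - 4 * (T 0 0 0 * T 1 1 0 - T 0 1 0 * T 1 0 0)
        * (T 0 0 1 * T 1 1 1 - T 0 1 1 * T 1 0 1)

lemma outer_of_det_eq_zero (n : Fin 2 → Fin 2 → ℝ)
    (h : n 0 0 * n 1 1 - n 0 1 * n 1 0 = 0) :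
    ∃ u v : Fin 2 → ℝ, ∀ i j, n i j = u i * v j := by
  by_cases h00 : n 0 0 = 0
  · by_cases h01 : n 0 1 = 0
    · by_cases h10 : n 1 0 = 0
      · exact ⟨![0, 1], ![0, n 1 1], by
          intro i j; fin_cases i <;> fin_cases j <;>
            simp [h00, h01, h10]⟩
      · exact ⟨![0, 1], ![n 1 0, n 1 1], by
          intro i j; fin_cases i <;> fin_cases j <;>
            simp [h00, h01]⟩
    · have h10 : n 1 0 = 0 := by
        rcases mul_eq_zero.1 (by linear_combination n 1 1 * h00 - h : n 0 1 * n 1 0 = 0) with h' | h'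
        · exact absurd h' h01
        · exact h'
      exact ⟨![n 0 1, n 1 1], ![0, 1], by
        intro i j; fin_cases i <;> fin_cases j <;> simp [h00, h10]⟩
  · refine ⟨![n 0 0, n 1 0], ![1, n 0 1 / n 0 0], ?_⟩
    intro i j; fin_cases i <;> fin_cases j <;> simp
    · field_simp
    · field_simp
      linear_combination h

lemma mem_of_pencil (T : Tensor222) (l1 m1 l2 m2 : ℝ)
    (hd : l1 * m2 - l2 * m1 ≠ 0)
    (h1 : (l1 * T 0 0 0 + m1 * T 0 0 1) * (l1 * T 1 1 0 + m1 * T 1 1 1) -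
          (l1 * T 0 1 0 + m1 * T 0 1 1) * (l1 * T 1 0 0 + m1 * T 1 0 1) = 0)
    (h2 : (l2 * T 0 0 0 + m2 * T 0 0 1) * (l2 * T 1 1 0 + m2 * T 1 1 1) -
          (l2 * T 0 1 0 + m2 * T 0 1 1) * (l2 * T 1 0 0 + m2 * T 1 0 1) = 0) :
    ∃ a b c : Fin 2 → Fin 2 → ℝ,
      T = fun i j k => ∑ l, a l i * b l j * c l k := by
  set d := l1 * m2 - l2 * m1 with hdd
  obtain ⟨u1, v1, hN1⟩ := outer_of_det_eq_zero
    (fun i j => l1 * T i j 0 + m1 * T i j 1) h1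
  obtain ⟨u2, v2, hN2⟩ := outer_of_det_eq_zero
    (fun i j => l2 * T i j 0 + m2 * T i j 1) h2
  refine ⟨![u1, u2], ![v1, v2], ![![m2 / d, -l2 / d], ![-m1 / d, l1 / d]], ?_⟩
  funext i j k
  have e1 : l1 * T i j 0 + m1 * T i j 1 = u1 i * v1 j := hN1 i j
  have e2 : l2 * T i j 0 + m2 * T i j 1 = u2 i * v2 j := hN2 i j
  have hA : T i j 0 = (m2 * (u1 i * v1 j) - m1 * (u2 i * v2 j)) / d := by
    rw [eq_div_iff hd]; linear_combination m2 * e1 - m1 * e2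
  have hB : T i j 1 = (-l2 * (u1 i * v1 j) + l1 * (u2 i * v2 j)) / d := by
    rw [eq_div_iff hd]; linear_combination -l2 * e1 + l1 * e2
  fin_cases k <;> simp [Fin.sum_univ_two]
  · rw [hA]; ring
  · rw [hB]; ring

/-- If the hyperdeterminant of a `2 × 2 × 2` real tensor is positive, its rank is 2. -/
theorem rank_eq_two_of_hdet_pos (T : Tensor222) (h : 0 < hdet T) :
    tensorRank T = 2 := by
  have h' : 0 < (T 0 0 0 * T 1 1 1 + T 0 0 1 * T 1 1 0 - T 0 1 0 * T 1 0 1 - T 0 1 1 * T 1 0 0) ^ 2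
      - 4 * (T 0 0 0 * T 1 1 0 - T 0 1 0 * T 1 0 0)
        * (T 0 0 1 * T 1 1 1 - T 0 1 1 * T 1 0 1) := h
  -- membership of 2
  have h2S : ∃ a b c : Fin 2 → Fin 2 → ℝ,
      T = fun i j k => ∑ l, a l i * b l j * c l k := by
    by_cases hc0 : T 0 0 1 * T 1 1 1 - T 0 1 1 * T 1 0 1 = 0
    · have hm0 : T 0 0 0 * T 1 1 1 + T 0 0 1 * T 1 1 0 - T 0 1 0 * T 1 0 1 - T 0 1 1 * T 1 0 0 ≠ 0 := by
        intro h0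
        rw [h0, hc0] at h'
        norm_num at h'
      refine mem_of_pencil T 0 1
        (T 0 0 0 * T 1 1 1 + T 0 0 1 * T 1 1 0 - T 0 1 0 * T 1 0 1 - T 0 1 1 * T 1 0 0)
        (-(T 0 0 0 * T 1 1 0 - T 0 1 0 * T 1 0 0)) ?_ ?_ ?_
      · intro h0; exact hm0 (by linear_combination -h0)
      · linear_combination hc0
      · linear_combination (T 0 0 0 * T 1 1 0 - T 0 1 0 * T 1 0 0) ^ 2 * hc0
    · set s := Real.sqrt (hdet T) with hs
      have hspos : 0 < s := Real.sqrt_pos.2 h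
      have hs2 : s ^ 2 =
          (T 0 0 0 * T 1 1 1 + T 0 0 1 * T 1 1 0 - T 0 1 0 * T 1 0 1 - T 0 1 1 * T 1 0 0) ^ 2
            - 4 * (T 0 0 0 * T 1 1 0 - T 0 1 0 * T 1 0 0)
              * (T 0 0 1 * T 1 1 1 - T 0 1 1 * T 1 0 1) := by
        rw [hs, Real.sq_sqrt h.le]; rfl
      refine mem_of_pencil T
        (2 * (T 0 0 1 * T 1 1 1 - T 0 1 1 * T 1 0 1))
        (-(T 0 0 0 * T 1 1 1 + T 0 0 1 * T 1 1 0 - T 0 1 0 * T 1 0 1 - T 0 1 1 * T 1 0 0) + s)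
        (2 * (T 0 0 1 * T 1 1 1 - T 0 1 1 * T 1 0 1))
        (-(T 0 0 0 * T 1 1 1 + T 0 0 1 * T 1 1 0 - T 0 1 0 * T 1 0 1 - T 0 1 1 * T 1 0 0) - s)
        ?_ ?_ ?_
      · intro h0
        have hcs : (T 0 0 1 * T 1 1 1 - T 0 1 1 * T 1 0 1) * s = 0 := by
          linear_combination (-1/4 : ℝ) * h0
        rcases mul_eq_zero.1 hcs with h'' | h''
        · exact hc0 h''
        · exact hspos.ne' h''
      · linear_combination (T 0 0 1 * T 1 1 1 - T 0 1 1 * T 1 0 1) * hs2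
      · linear_combination (T 0 0 1 * T 1 1 1 - T 0 1 1 * T 1 0 1) * hs2
  -- conclude
  have hne : {r : ℕ | ∃ a b c : Fin r → Fin 2 → ℝ,
      T = fun i j k => ∑ l, a l i * b l j * c l k}.Nonempty := ⟨2, h2S⟩
  have hmem := Nat.sInf_mem hne
  have hle : tensorRank T ≤ 2 := Nat.sInf_le h2S
  have h0 : tensorRank T ≠ 0 := by
    intro e
    rw [tensorRank] at e
    rw [e] at hmem
    obtain ⟨a, b, c, hT⟩ := hmem
    rw [hT] at h'
    simp at h'
  have h1 : tensorRank T ≠ 1 := by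
    intro e
    rw [tensorRank] at e
    rw [e] at hmem
    obtain ⟨a, b, c, hT⟩ := hmem
    rw [hT] at h'
    simp only [Fin.sum_univ_one] at h'
    ring_nf at h'
    exact absurd h' (lt_irrefl 0)
  omega
end

section
/- Let T be a 2×2×2 real tensor. If Δ(T) < 0, then rank(T) = 3. -/
set_option maxHeartbeats 4000000 in
/-- If the hyperdeterminant of a `2 × 2 × 2` real tensor is negative, its rank is 3. -/
theorem rank_eq_three_of_hdet_neg (T : Tensor222) (h : hdet T < 0) :
    tensorRank T = 3 := by
  have hb : (T 0 0 1 * T 1 1 1 - T 0 1 1 * T 1 0 1) ≠ 0 := by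
    intro h0
    have he : hdet T = (T 0 0 0 * T 1 1 1 + T 0 0 1 * T 1 1 0 - T 0 1 0 * T 1 0 1 - T 0 1 1 * T 1 0 0) ^ 2 := by
      unfold hdet; linear_combination (-4 * (T 0 0 0 * T 1 1 0 - T 0 1 0 * T 1 0 0)) * h0
    nlinarith [sq_nonneg (T 0 0 0 * T 1 1 1 + T 0 0 1 * T 1 1 0 - T 0 1 0 * T 1 0 1 - T 0 1 1 * T 1 0 0)]
  have hg : (T 1 0 0 * T 1 1 1 - T 1 1 0 * T 1 0 1) ≠ 0 := by
    intro h0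
    have he : hdet T = ((T 0 0 0 * T 1 1 1 - T 0 1 0 * T 1 0 1) - (T 1 1 0 * T 0 0 1 - T 1 0 0 * T 0 1 1)) ^ 2 := by
      unfold hdet; linear_combination (4 * (T 0 1 0 * T 0 0 1 - T 0 0 0 * T 0 1 1)) * h0
    nlinarith [sq_nonneg ((T 0 0 0 * T 1 1 1 - T 0 1 0 * T 1 0 1) - (T 1 1 0 * T 0 0 1 - T 1 0 0 * T 0 1 1))]
  have h3 : 3 ∈ {r : ℕ | ∃ a b c : Fin r → Fin 2 → ℝ,
      T = fun i j k => ∑ l, a l i * b l j * c l k} := by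
    refine ⟨![![1 - (((T 0 0 0 * T 1 1 1 - T 0 1 0 * T 1 0 1) + (T 1 1 0 * T 0 0 1 - T 1 0 0 * T 0 1 1)) / (2 * (T 0 0 1 * T 1 1 1 - T 0 1 1 * T 1 0 1))) + ((T 0 0 0 * T 1 1 1 - T 0 1 0 * T 1 0 1) / (T 0 0 1 * T 1 1 1 - T 0 1 1 * T 1 0 1)), ((T 1 0 0 * T 1 1 1 - T 1 1 0 * T 1 0 1) / (T 0 0 1 * T 1 1 1 - T 0 1 1 * T 1 0 1))], ![-1, 0], ![((T 0 0 0 * T 1 1 1 - T 0 1 0 * T 1 0 1) / (T 0 0 1 * T 1 1 1 - T 0 1 1 * T 1 0 1)) - (((T 0 0 0 * T 1 1 1 - T 0 1 0 * T 1 0 1) + (T 1 1 0 * T 0 0 1 - T 1 0 0 * T 0 1 1)) / (2 * (T 0 0 1 * T 1 1 1 - T 0 1 1 * T 1 0 1))), ((T 1 0 0 * T 1 1 1 - T 1 1 0 * T 1 0 1) / (T 0 0 1 * T 1 1 1 - T 0 1 1 * T 1 0 1))]], ![![T 0 0 1 + (((((T 0 0 0 * T 1 1 1 - T 0 1 0 *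 T 1 0 1) + (T 1 1 0 * T 0 0 1 - T 1 0 0 * T 0 1 1)) / (2 * (T 0 0 1 * T 1 1 1 - T 0 1 1 * T 1 0 1))) - ((T 0 0 0 * T 1 1 1 - T 0 1 0 * T 1 0 1) / (T 0 0 1 * T 1 1 1 - T 0 1 1 * T 1 0 1)) + 1) * (T 0 0 1 * T 1 1 1 - T 0 1 1 * T 1 0 1) / (T 1 0 0 * T 1 1 1 - T 1 1 0 * T 1 0 1)) * T 1 0 1, T 0 1 1 + (((((T 0 0 0 * T 1 1 1 - T 0 1 0 * T 1 0 1) + (T 1 1 0 * T 0 0 1 - T 1 0 0 * T 0 1 1)) / (2 * (T 0 0 1 * T 1 1 1 - T 0 1 1 * T 1 0 1))) - ((T 0 0 0 * T 1 1 1 - T 0 1 0 * T 1 0 1) / (T 0 0 1 * T 1 1 1 - T 0 1 1 * T 1 0 1)) + 1) * (T 0 0 1 * T 1 1 1 - T 0 1 1 * T 1 0 1) / (T 1 0 0 * T 1 1 1 - T 1 1 0 * T 1 0 1)) * T 1 1 1], ![((T 0 0 1 * T 1 1 1 - T 0 1 1 * T 1 0 1) / (T 1 0 0 * T 1 1 1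 - T 1 1 0 * T 1 0 1)) * T 1 0 1, ((T 0 0 1 * T 1 1 1 - T 0 1 1 * T 1 0 1) / (T 1 0 0 * T 1 1 1 - T 1 1 0 * T 1 0 1)) * T 1 1 1], ![T 0 0 1 + (((((T 0 0 0 * T 1 1 1 - T 0 1 0 * T 1 0 1) + (T 1 1 0 * T 0 0 1 - T 1 0 0 * T 0 1 1)) / (2 * (T 0 0 1 * T 1 1 1 - T 0 1 1 * T 1 0 1))) - ((T 0 0 0 * T 1 1 1 - T 0 1 0 * T 1 0 1) / (T 0 0 1 * T 1 1 1 - T 0 1 1 * T 1 0 1))) * (T 0 0 1 * T 1 1 1 - T 0 1 1 * T 1 0 1) / (T 1 0 0 * T 1 1 1 - T 1 1 0 * T 1 0 1)) * T 1 0 1, T 0 1 1 + (((((T 0 0 0 * T 1 1 1 - T 0 1 0 * T 1 0 1) + (T 1 1 0 * T 0 0 1 - T 1 0 0 * T 0 1 1)) / (2 * (T 0 0 1 * T 1 1 1 - T 0 1 1 * T 1 0 1))) - ((T 0 0 0 * T 1 1 1 - T 0 1 0 * T 1 0 1) / (T 0 0 1 * T 1 1 1 - T 0 1 1 * T 1 0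 1))) * (T 0 0 1 * T 1 1 1 - T 0 1 1 * T 1 0 1) / (T 1 0 0 * T 1 1 1 - T 1 1 0 * T 1 0 1)) * T 1 1 1]], ![![(((T 0 0 0 * T 1 1 1 - T 0 1 0 * T 1 0 1) + (T 1 1 0 * T 0 0 1 - T 1 0 0 * T 0 1 1)) / (2 * (T 0 0 1 * T 1 1 1 - T 0 1 1 * T 1 0 1))), 1], ![(((T 0 0 0 * T 1 1 1 - T 0 1 0 * T 1 0 1) + (T 1 1 0 * T 0 0 1 - T 1 0 0 * T 0 1 1)) / (2 * (T 0 0 1 * T 1 1 1 - T 0 1 1 * T 1 0 1))) + ((T 0 0 0 * T 1 1 0 - T 0 1 0 * T 1 0 0) / (T 0 0 1 * T 1 1 1 - T 0 1 1 * T 1 0 1) - (((T 0 0 0 * T 1 1 1 - T 0 1 0 * T 1 0 1) + (T 1 1 0 * T 0 0 1 - T 1 0 0 * T 0 1 1)) / (2 * (T 0 0 1 * T 1 1 1 - T 0 1 1 * T 1 0 1))) ^ 2), 1], ![1 - (((T 0 0 0 * T 1 1 1 - T 0 1 0 * T 1 0 1) + (T 1 1 0 * T 0 0 1 - T 1 0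 0 * T 0 1 1)) / (2 * (T 0 0 1 * T 1 1 1 - T 0 1 1 * T 1 0 1))), -1]], ?_⟩
    have hb1 : T 1 1 1 * T 0 0 1 - T 1 0 1 * T 0 1 1 ≠ 0 := by rw [mul_comm (T 1 1 1), mul_comm (T 1 0 1)]; exact hb
    have hb2 : T 0 0 1 * T 1 1 1 - T 1 0 1 * T 0 1 1 ≠ 0 := by rw [mul_comm (T 1 0 1)]; exact hb
    have hb3 : T 1 1 1 * T 0 0 1 - T 0 1 1 * T 1 0 1 ≠ 0 := by rw [mul_comm (T 1 1 1)]; exact hb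
    have hg1 : T 1 1 1 * T 1 0 0 - T 1 0 1 * T 1 1 0 ≠ 0 := by rw [mul_comm (T 1 1 1), mul_comm (T 1 0 1)]; exact hg
    have hg2 : T 1 0 0 * T 1 1 1 - T 1 0 1 * T 1 1 0 ≠ 0 := by rw [mul_comm (T 1 0 1)]; exact hg
    have hg3 : T 1 1 1 * T 1 0 0 - T 1 1 0 * T 1 0 1 ≠ 0 := by rw [mul_comm (T 1 1 1)]; exact hg
    funext i j k
    fin_cases i <;> fin_cases j <;> fin_cases k <;>
      · simp only [Fin.sum_univ_three, Matrix.cons_val_zero, Matrix.cons_val_one,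
          Matrix.head_cons, Matrix.cons_val_fin_one, Fin.isValue, Fin.zero_eta, Fin.mk_one,
            Matrix.cons_val]
        field_simp
        ring
  have hlow : ∀ m ∈ {r : ℕ | ∃ a b c : Fin r → Fin 2 → ℝ,
      T = fun i j k => ∑ l, a l i * b l j * c l k}, 3 ≤ m := by
    rintro m ⟨a, bb, cc, hT⟩
    by_contra hlt
    push_neg at hlt
    interval_cases m
    · have h0 : hdet T = 0 := by
        subst hT; unfold hdet; simp
      linarith
    · have h0 : hdet T = 0 := by
        subst hT; unfold hdet
        simp only [Fin.sum_univ_one]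
        ring
      linarith
    · have h0 : hdet T = ((a 0 0 * a 1 1 - a 0 1 * a 1 0) * (bb 0 0 * bb 1 1 - bb 0 1 * bb 1 0)
          * (cc 0 0 * cc 1 1 - cc 0 1 * cc 1 0)) ^ 2 := by
        subst hT; unfold hdet
        simp only [Fin.sum_univ_two]
        ring
      nlinarith [sq_nonneg ((a 0 0 * a 1 1 - a 0 1 * a 1 0) * (bb 0 0 * bb 1 1 - bb 0 1 * bb 1 0)
          * (cc 0 0 * cc 1 1 - cc 0 1 * cc 1 0))]
  unfold tensorRank
  exact le_antisymm (Nat.sInf_le h3) (le_csInf ⟨3, h3⟩ hlow)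
end

section
/- Every 2×2×2 real tensor has rank at most 3. -/
lemma tensorRank_le_of_decomp (T : Tensor222) (a b c : Fin 3 → Fin 2 → ℝ)
    (h : ∀ i j k, T i j k = ∑ l, a l i * b l j * c l k) : tensorRank T ≤ 3 := by
  apply Nat.sInf_le
  exact ⟨a, b, c, by funext i j k; exact h i j k⟩

/-- Every `2 × 2 × 2` real tensor has rank at most 3. -/
theorem tensorRank_le_three (T : Tensor222) : tensorRank T ≤ 3 := by
  by_cases hd : T 0 0 0 * T 1 1 0 - T 0 1 0 * T 1 0 0 = 0
  · -- the first slice A is singular, hence rank ≤ 1 : A = u ⊗ v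
    have key : ∀ u v : Fin 2 → ℝ, (∀ i j, T i j 0 = u i * v j) → tensorRank T ≤ 3 := by
      intro u v huv
      apply tensorRank_le_of_decomp T
        ![u, ![T 0 0 1, T 1 0 1], ![T 0 1 1, T 1 1 1]]
        ![v, ![1, 0], ![0, 1]]
        ![![1, 0], ![0, 1], ![0, 1]]
      intro i j k
      fin_cases i <;> fin_cases j <;> fin_cases k <;>
        simp [Fin.sum_univ_three, Matrix.vecHead, Matrix.vecTail,
          huv 0 0, huv 0 1, huv 1 0, huv 1 1]
    by_cases h1 : T 0 0 0 = 0
    · by_cases h2 : T 0 1 0 = 0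
      · exact key ![0, 1] ![T 1 0 0, T 1 1 0] (by
          intro i j
          fin_cases i <;> fin_cases j <;>
            simp [Matrix.vecHead, Matrix.vecTail, h1, h2])
      · -- A 0 0 = 0, A 0 1 ≠ 0 ⇒ A 1 0 = 0 (from det = 0)
        have h3 : T 1 0 0 = 0 := by
          rw [h1] at hd
          simp only [zero_mul, zero_sub, neg_eq_zero] at hd
          rcases mul_eq_zero.mp hd with h | h
          · exact absurd h h2
          · exact h
        exact key ![T 0 1 0, T 1 1 0] ![0, 1] (by
          intro i j
          fin_cases i <;> fin_cases j <;>
            simp [Matrix.vecHead, Matrix.vecTail, h1, h3])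
    · exact key ![T 0 0 0, T 1 0 0] ![1, T 0 1 0 / T 0 0 0] (by
        intro i j
        fin_cases i <;> fin_cases j <;>
          simp [Matrix.vecHead, Matrix.vecTail] <;> field_simp <;> linarith [hd])
  · -- generic case: det of the first slice is nonzero
    apply tensorRank_le_of_decomp T
      ![![T 0 0 0, T 1 0 0], ![T 0 1 0, T 1 1 0],
        ![(T 1 1 0 * T 0 1 1 - T 0 1 0 * T 1 1 1) * T 0 0 0 +
            (-(T 1 0 0) * T 0 0 1 + T 0 0 0 * T 1 0 1) * T 0 1 0,
          (T 1 1 0 * T 0 1 1 - T 0 1 0 * T 1 1 1) * T 1 0 0 +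
            (-(T 1 0 0) * T 0 0 1 + T 0 0 0 * T 1 0 1) * T 1 1 0]]
      ![![1, 0], ![0, 1], fun _ => 1]
      ![![1, ((T 1 1 0 * T 0 0 1 - T 0 1 0 * T 1 0 1) -
              (T 1 1 0 * T 0 1 1 - T 0 1 0 * T 1 1 1)) /
              (T 0 0 0 * T 1 1 0 - T 0 1 0 * T 1 0 0)],
        ![1, ((-(T 1 0 0) * T 0 1 1 + T 0 0 0 * T 1 1 1) -
              (-(T 1 0 0) * T 0 0 1 + T 0 0 0 * T 1 0 1)) /
              (T 0 0 0 * T 1 1 0 - T 0 1 0 * T 1 0 0)],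
        ![0, 1 / (T 0 0 0 * T 1 1 0 - T 0 1 0 * T 1 0 0)]]
    have hd2 : T 1 1 0 * T 0 0 0 - T 1 0 0 * T 0 1 0 ≠ 0 := by
      intro h; apply hd; linarith
    have hd3 : -(T 1 0 0 * T 0 1 0) + T 1 1 0 * T 0 0 0 ≠ 0 := by
      intro h; apply hd; linarith
    intro i j k
    fin_cases i <;> fin_cases j <;> fin_cases k <;>
      simp [Fin.sum_univ_three, Matrix.vecHead, Matrix.vecTail] <;>
      field_simp <;> ring
end

section
/- For every 2×2×2 real tensor T and all 2×2 real matrices U, V, W, the hyperdeterminant satisfies Δ(T ×₁ U ×₂ V ×₃ W) = Δ(T) · det(U)² · det(V)² · det(W)². -/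
/-- The multi-TTM action: `(T ×₁ U ×₂ V ×₃ W)(α,β,γ) = ∑ U α i * V β j * W γ k * T i j k`. -/
def ttm (T : Tensor222) (U V W : Matrix (Fin 2) (Fin 2) ℝ) : Tensor222 :=
  fun α β γ => ∑ i, ∑ j, ∑ k, U α i * V β j * W γ k * T i j k

/-- The hyperdeterminant is a relative invariant of the multi-TTM action:
`Δ(T ×₁ U ×₂ V ×₃ W) = Δ(T) · det(U)² · det(V)² · det(W)²`. -/
theorem hdet_ttm (T : Tensor222) (U V W : Matrix (Fin 2) (Fin 2) ℝ) :
    hdet (ttm T U V W) = hdet T * U.det ^ 2 * V.det ^ 2 * W.det ^ 2 := by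
  simp only [hdet, ttm, Fin.sum_univ_two, Matrix.det_fin_two]
  ring
end

section
/- Let T be a 2×2×2 real tensor with Δ(T) = 0. If all three unfoldings T₍₁₎, T₍₂₎, T₍₃₎ have matrix rank 2, then rank(T) = 3. -/
/-- Mode-1 unfolding: rows indexed by the first index. -/
def unfold1 (T : Tensor222) : Matrix (Fin 2) (Fin 2 × Fin 2) ℝ :=
  fun i jk => T i jk.1 jk.2

/-- Mode-2 unfolding: rows indexed by the second index. -/
def unfold2 (T : Tensor222) : Matrix (Fin 2) (Fin 2 × Fin 2) ℝ :=
  fun j ik => T ik.1 j ik.2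

/-- Mode-3 unfolding: rows indexed by the third index. -/
def unfold3 (T : Tensor222) : Matrix (Fin 2) (Fin 2 × Fin 2) ℝ :=
  fun k ij => T ij.1 ij.2 k

open Module

/-- An outer-product-shaped 2×n matrix has rank at most 1. -/
lemma aux_rank_le_one_outer {n : Type*} [Fintype n] (M : Matrix (Fin 2) n ℝ)
    (u : Fin 2 → ℝ) (z : n → ℝ) (hM : ∀ i p, M i p = u i * z p) : M.rank ≤ 1 := by
  have hr : LinearMap.range M.mulVecLin ≤ ℝ ∙ u := by
    rintro _ ⟨x, rfl⟩
    refine Submodule.mem_span_singleton.2 ⟨∑ p, z p * x p, ?_⟩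
    funext i
    simp only [Matrix.mulVecLin_apply, Matrix.mulVec, dotProduct, Pi.smul_apply,
      smul_eq_mul, hM, Finset.sum_mul, Finset.mul_sum]
    exact Finset.sum_congr rfl fun p _ => by ring
  have h2 : Matrix.rank M ≤ finrank ℝ (ℝ ∙ u) := Submodule.finrank_mono hr
  refine h2.trans ?_
  by_cases hu : u = 0
  · rw [hu, Submodule.span_zero_singleton]
    simp
  · exact le_of_eq (finrank_span_singleton hu)

/-- If the rows `x, y` are linearly dependent, the 2×n matrix with rows in their span
has rank ≤ 1. -/
lemma aux_rank_le_one_of_cross {n : Type*} [Fintype n] (M : Matrix (Fin 2) n ℝ)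
    (x y : Fin 2 → ℝ) (v w : n → ℝ)
    (hM : ∀ i p, M i p = x i * v p + y i * w p)
    (hc : x 0 * y 1 - x 1 * y 0 = 0) : M.rank ≤ 1 := by
  by_cases hx0 : x 0 = 0
  · by_cases hx1 : x 1 = 0
    · refine aux_rank_le_one_outer M y w fun i p => ?_
      have hx : x i = 0 := by fin_cases i <;> assumption
      rw [hM, hx]; ring
    · refine aux_rank_le_one_outer M x (fun p => v p + (y 1 / x 1) * w p) fun i p => ?_
      have hy : y i = (y 1 / x 1) * x i := by
        fin_cases i
        · show y 0 = y 1 / x 1 * x 0; field_simp; nlinarith [hc]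
        · show y 1 = y 1 / x 1 * x 1; field_simp
      rw [hM, hy]; ring
  · refine aux_rank_le_one_outer M x (fun p => v p + (y 0 / x 0) * w p) fun i p => ?_
    have hy : y i = (y 0 / x 0) * x i := by
      fin_cases i
      · show y 0 = y 0 / x 0 * x 0; field_simp
      · show y 1 = y 0 / x 0 * x 1; field_simp; nlinarith [hc]
    rw [hM, hy]; ring

/-- A 2×2 matrix with zero determinant factors as an outer product. -/
lemma aux_rank1_factor (M : Fin 2 → Fin 2 → ℝ)
    (h : M 0 0 * M 1 1 - M 0 1 * M 1 0 = 0) :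
    ∃ u v : Fin 2 → ℝ, ∀ i j, M i j = u i * v j := by
  by_cases h00 : M 0 0 = 0
  · by_cases h01 : M 0 1 = 0
    · exact ⟨![0, 1], ![M 1 0, M 1 1], by
        intro i j; fin_cases i <;> fin_cases j <;> simp [h00, h01]⟩
    · have h10 : M 1 0 = 0 := by
        have h' : M 0 1 * M 1 0 = 0 := by rw [h00] at h; linarith
        rcases mul_eq_zero.1 h' with h'' | h''
        · exact absurd h'' h01
        · exact h''
      exact ⟨![M 0 1, M 1 1], ![0, 1], by
        intro i j; fin_cases i <;> fin_cases j <;> simp [h00, h10]⟩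
  · refine ⟨![M 0 0, M 1 0], ![1, M 0 1 / M 0 0], ?_⟩
    intro i j; fin_cases i <;> fin_cases j <;> simp
    · field_simp
    · field_simp; nlinarith [h]

/-- Pad a rank-`r` decomposition (`r ≤ 2`) to a rank-2 one by adding zero terms. -/
lemma aux_pad {r : ℕ} (hr : r ≤ 2) (a b c : Fin r → Fin 2 → ℝ) :
    ∃ A B C : Fin 2 → Fin 2 → ℝ, ∀ i j k : Fin 2,
      (∑ l, a l i * b l j * c l k) = ∑ l : Fin 2, A l i * B l j * C l k := by
  refine ⟨fun l i => if h : (l : ℕ) < r then a ⟨l, h⟩ i else 0,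
          fun l j => if h : (l : ℕ) < r then b ⟨l, h⟩ j else 0,
          fun l k => if h : (l : ℕ) < r then c ⟨l, h⟩ k else 0, fun i j k => ?_⟩
  set g : ℕ → ℝ := fun n =>
    if h : n < r then a ⟨n, h⟩ i * b ⟨n, h⟩ j * c ⟨n, h⟩ k else 0 with hg
  have hL : (∑ l : Fin r, a l i * b l j * c l k) = ∑ n ∈ Finset.range r, g n := by
    rw [← Fin.sum_univ_eq_sum_range g r]
    refine Finset.sum_congr rfl fun l _ => ?_
    simp [hg, l.isLt]
  have hR : (∑ l : Fin 2,
      (if h : (l : ℕ) < r then a ⟨l, h⟩ i else 0) *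
      (if h : (l : ℕ) < r then b ⟨l, h⟩ j else 0) *
      (if h : (l : ℕ) < r then c ⟨l, h⟩ k else 0)) = ∑ n ∈ Finset.range 2, g n := by
    rw [← Fin.sum_univ_eq_sum_range g 2]
    refine Finset.sum_congr rfl fun l _ => ?_
    by_cases h : (l : ℕ) < r <;> simp [hg, h]
  rw [hL, hR]
  exact Finset.sum_subset (Finset.range_subset_range.2 hr)
    (fun n _ hn => by simp only [hg]; exact dif_neg (Finset.mem_range.not.1 hn))

/-- Any tensor with vanishing hyperdeterminant is a sum of three rank-one tensors. -/
lemma aux_exists_three (T : Tensor222) (h : hdet T = 0) :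
    ∃ a b c : Fin 3 → Fin 2 → ℝ,
      T = fun i j k => ∑ l, a l i * b l j * c l k := by
  by_cases hB : T 0 0 1 * T 1 1 1 - T 0 1 1 * T 1 0 1 = 0
  · obtain ⟨u, v, huv⟩ := aux_rank1_factor (fun i j => T i j 1) hB
    refine ⟨![![1, 0], ![0, 1], u], ![fun j => T 0 j 0, fun j => T 1 j 0, v],
      ![![(1 : ℝ), 0], ![1, 0], ![0, 1]], ?_⟩
    funext i j k
    have := huv i j
    fin_cases i <;> fin_cases k <;>
      simp_all [Fin.sum_univ_three]
  · obtain ⟨lam, hlam⟩ : ∃ l : ℝ, l = (T 0 0 0 * T 1 1 1 + T 0 0 1 * T 1 1 0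
        - T 0 1 0 * T 1 0 1 - T 0 1 1 * T 1 0 0)
        / (2 * (T 0 0 1 * T 1 1 1 - T 0 1 1 * T 1 0 1)) := ⟨_, rfl⟩
    have key : (fun i j => T i j 0 - lam * T i j 1) 0 0 * (fun i j => T i j 0 - lam * T i j 1) 1 1
        - (fun i j => T i j 0 - lam * T i j 1) 0 1 * (fun i j => T i j 0 - lam * T i j 1) 1 0
        = 0 := by
      simp only
      rw [hlam]
      have h' : hdet T = 0 := h
      rw [hdet] at h'
      have hB' : T 1 1 1 * T 0 0 1 - T 1 0 1 * T 0 1 1 ≠ 0 := fun h0 => hB (by linarith)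
      field_simp
      linear_combination (-(T 0 0 1 * T 1 1 1 - T 0 1 1 * T 1 0 1)) * h'
    obtain ⟨u, v, huv⟩ :=
      aux_rank1_factor (fun i j => T i j 0 - lam * T i j 1) key
    refine ⟨![u, ![1, 0], ![0, 1]], ![v, fun j => T 0 j 1, fun j => T 1 j 1],
      ![![(1 : ℝ), 0], ![lam, 1], ![lam, 1]], ?_⟩
    have H : ∀ i j k : Fin 2, T i j k = ∑ l : Fin 3,
        (![u, ![1, 0], ![0, 1]] : Fin 3 → Fin 2 → ℝ) l i *
        (![v, fun j => T 0 j 1, fun j => T 1 j 1] : Fin 3 → Fin 2 → ℝ) l j *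
        (![![(1 : ℝ), 0], ![lam, 1], ![lam, 1]] : Fin 3 → Fin 2 → ℝ) l k := by
      simp only [Fin.forall_fin_two, Fin.sum_univ_three, Matrix.cons_val_zero,
        Matrix.cons_val_one, Matrix.head_cons, Matrix.cons_val_two, Matrix.tail_cons]
      norm_num
      repeat' constructor
      all_goals
        first
          | linear_combination huv 0 0
          | linear_combination huv 0 1
          | linear_combination huv 1 0
          | linear_combination huv 1 1
    funext i j k
    exact H i j k

/-- If `Δ(T) = 0` and all three unfoldings have matrix rank 2, then `rank(T) = 3`. -/
theorem rank_eq_three_of_hdet_zero_mrank_two (T : Tensor222) (h : hdet T = 0)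
    (h1 : (unfold1 T).rank = 2) (h2 : (unfold2 T).rank = 2)
    (h3 : (unfold3 T).rank = 2) :
    tensorRank T = 3 := by
  obtain ⟨a₃, b₃, c₃, h₃⟩ := aux_exists_three T h
  have hmem : 3 ∈ {r : ℕ | ∃ a b c : Fin r → Fin 2 → ℝ,
      T = fun i j k => ∑ l, a l i * b l j * c l k} := ⟨a₃, b₃, c₃, h₃⟩
  refine le_antisymm (Nat.sInf_le hmem) (le_csInf ⟨3, hmem⟩ fun r hr => ?_)
  by_contra hlt
  push_neg at hlt
  obtain ⟨a, b, c, hT⟩ := hr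
  obtain ⟨A, B, C, hsum⟩ := aux_pad (by omega) a b c
  have hT2 : ∀ i j k, T i j k =
      A 0 i * B 0 j * C 0 k + A 1 i * B 1 j * C 1 k := by
    intro i j k
    have : T i j k = ∑ l, a l i * b l j * c l k := by rw [hT]
    rw [this, hsum, Fin.sum_univ_two]
  have hd : ((A 0 0 * A 1 1 - A 0 1 * A 1 0) * (B 0 0 * B 1 1 - B 0 1 * B 1 0)
      * (C 0 0 * C 1 1 - C 0 1 * C 1 0)) ^ 2 = 0 := by
    rw [← h, hdet]
    rw [hT2 0 0 0, hT2 1 1 1, hT2 0 0 1, hT2 1 1 0, hT2 0 1 0, hT2 1 0 1,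
      hT2 0 1 1, hT2 1 0 0]
    ring
  have hd' := pow_eq_zero_iff (n := 2) (by norm_num) |>.1 hd
  rcases mul_eq_zero.1 hd' with hd'' | hC
  · rcases mul_eq_zero.1 hd'' with hA | hB
    · have hle : (unfold1 T).rank ≤ 1 := by
        refine aux_rank_le_one_of_cross _ (fun i => A 0 i) (fun i => A 1 i)
          (fun p => B 0 p.1 * C 0 p.2) (fun p => B 1 p.1 * C 1 p.2) (fun i p => ?_) ?_
        · show T i p.1 p.2 = _
          rw [hT2]; ring
        · linarith [hA]
      omega
    · have hle : (unfold2 T).rank ≤ 1 := by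
        refine aux_rank_le_one_of_cross _ (fun j => B 0 j) (fun j => B 1 j)
          (fun p => A 0 p.1 * C 0 p.2) (fun p => A 1 p.1 * C 1 p.2) (fun j p => ?_) ?_
        · show T p.1 j p.2 = _
          rw [hT2]; ring
        · linarith [hB]
      omega
  · have hle : (unfold3 T).rank ≤ 1 := by
      refine aux_rank_le_one_of_cross _ (fun k => C 0 k) (fun k => C 1 k)
        (fun p => A 0 p.1 * B 0 p.2) (fun p => A 1 p.1 * B 1 p.2) (fun k p => ?_) ?_
      · show T p.1 p.2 k = _
        rw [hT2]; ring
      · linarith [hC]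
    omega
end

section
/- Let T be a 2×2×2 real tensor with Δ(T) = 0. If the triple of matrix ranks (rank T₍₁₎, rank T₍₂₎, rank T₍₃₎) is a permutation of (2,2,1), then rank(T) = 2. -/
open Matrix Module Submodule

lemma rank_le_one_of_outer {m : Type*} [Fintype m] (A : Matrix (Fin 2) m ℝ)
    (u : Fin 2 → ℝ) (w : m → ℝ) (hA : ∀ i p, A i p = u i * w p) : A.rank ≤ 1 := by
  rw [Matrix.rank_eq_finrank_span_row]
  have hsub : Set.range A ⊆ (Submodule.span ℝ ({w} : Set (m → ℝ)) : Set (m → ℝ)) := by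
    rintro x ⟨i, rfl⟩
    have : A i = u i • w := by funext p; simp [hA, Pi.smul_apply, smul_eq_mul]
    rw [this]
    exact Submodule.smul_mem _ _ (Submodule.mem_span_singleton_self w)
  calc finrank ℝ (span ℝ (Set.range A)) ≤ finrank ℝ (span ℝ ({w} : Set (m → ℝ))) :=
        Submodule.finrank_mono (Submodule.span_le.mpr hsub)
    _ ≤ 1 := by simpa using finrank_span_le_card ({w} : Set (m → ℝ))

lemma exists_outer_of_rank_le_one {m : Type*} [Fintype m] (A : Matrix (Fin 2) m ℝ)
    (hA : A.rank ≤ 1) : ∃ u : Fin 2 → ℝ, ∃ v : m → ℝ, ∀ i p, A i p = u i * v p := by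
  by_cases h0 : A 0 = 0
  · refine ⟨![0, 1], A 1, fun i p => ?_⟩
    fin_cases i
    · simp [congrFun h0 p]
    · simp
  · have hfr : finrank ℝ (span ℝ (Set.range A)) ≤ 1 := by
      rw [Matrix.rank_eq_finrank_span_row] at hA; exact hA
    have hle : span ℝ ({A 0} : Set (m → ℝ)) ≤ span ℝ (Set.range A) :=
      Submodule.span_mono (by simp [Set.singleton_subset_iff, Set.mem_range_self]; exact ⟨0, rfl⟩)
    have heq : span ℝ ({A 0} : Set (m → ℝ)) = span ℝ (Set.range A) := by
      apply Submodule.eq_of_le_of_finrank_le hle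
      rw [finrank_span_singleton h0]; exact hfr
    have h1 : A 1 ∈ span ℝ ({A 0} : Set (m → ℝ)) := by
      rw [heq]; exact Submodule.subset_span (Set.mem_range_self 1)
    obtain ⟨c, hc⟩ := Submodule.mem_span_singleton.mp h1
    refine ⟨![1, c], A 0, fun i p => ?_⟩
    fin_cases i
    · simp
    · have := congrFun hc p
      simp at this ⊢
      linarith [this]

/-- If `Δ(T) = 0` and the multilinear rank is a permutation of `(2,2,1)`, then
`rank(T) = 2`. -/
theorem rank_eq_two_of_hdet_zero_mrank_perm (T : Tensor222) (h : hdet T = 0)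
    (hperm :
      ((unfold1 T).rank, (unfold2 T).rank, (unfold3 T).rank) = (2, 2, 1) ∨
      ((unfold1 T).rank, (unfold2 T).rank, (unfold3 T).rank) = (2, 1, 2) ∨
      ((unfold1 T).rank, (unfold2 T).rank, (unfold3 T).rank) = (1, 2, 2)) :
    tensorRank T = 2 := by
  clear h
  simp only [Prod.mk.injEq] at hperm
  have h2 : 2 ∈ {r : ℕ | ∃ a b c : Fin r → Fin 2 → ℝ,
      T = fun i j k => ∑ l, a l i * b l j * c l k} := by
    rcases hperm with ⟨h1, h2, h3⟩ | ⟨h1, h2, h3⟩ | ⟨h1, h2, h3⟩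
    · -- unfold3 rank 1
      obtain ⟨u, v, huv⟩ := exists_outer_of_rank_le_one (unfold3 T) (by rw [h3])
      have hT : ∀ i j k, T i j k = u k * v (i, j) := fun i j k => huv k (i, j)
      refine ⟨fun l i => if i = l then 1 else 0, fun l j => v (l, j), fun _ => u, ?_⟩
      funext i j k
      rw [Fin.sum_univ_two, hT]
      fin_cases i <;> simp <;> ring
    · -- unfold2 rank 1
      obtain ⟨u, v, huv⟩ := exists_outer_of_rank_le_one (unfold2 T) (by rw [h2])
      have hT : ∀ i j k, T i j k = u j * v (i, k) := fun i j k => huv j (i, k)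
      refine ⟨fun l i => if i = l then 1 else 0, fun _ => u, fun l k => v (l, k), ?_⟩
      funext i j k
      rw [Fin.sum_univ_two, hT]
      fin_cases i <;> simp <;> ring
    · -- unfold1 rank 1
      obtain ⟨u, v, huv⟩ := exists_outer_of_rank_le_one (unfold1 T) (by rw [h1])
      have hT : ∀ i j k, T i j k = u i * v (j, k) := fun i j k => huv i (j, k)
      refine ⟨fun _ => u, fun l j => if j = l then 1 else 0, fun l k => v (l, k), ?_⟩
      funext i j k
      rw [Fin.sum_univ_two, hT]
      fin_cases j <;> simp <;> ring
  have hn0 : (0:ℕ) ∉ {r : ℕ | ∃ a b c : Fin r → Fin 2 → ℝ,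
      T = fun i j k => ∑ l, a l i * b l j * c l k} := by
    rintro ⟨a, b, c, hT⟩
    have h0 : unfold1 T = 0 := by
      funext i p
      simp [unfold1, congrFun (congrFun (congrFun hT i) p.1) p.2]
    rw [h0, Matrix.rank_zero] at hperm
    omega
  have hn1 : (1:ℕ) ∉ {r : ℕ | ∃ a b c : Fin r → Fin 2 → ℝ,
      T = fun i j k => ∑ l, a l i * b l j * c l k} := by
    rintro ⟨a, b, c, hT⟩
    have hTp : ∀ i j k, T i j k = a 0 i * b 0 j * c 0 k := by
      intro i j k
      rw [congrFun (congrFun (congrFun hT i) j) k, Fin.sum_univ_one]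
    have r1 : (unfold1 T).rank ≤ 1 :=
      rank_le_one_of_outer _ (a 0) (fun p => b 0 p.1 * c 0 p.2)
        (fun i p => by simp [unfold1, hTp]; ring)
    have r2 : (unfold2 T).rank ≤ 1 :=
      rank_le_one_of_outer _ (b 0) (fun p => a 0 p.1 * c 0 p.2)
        (fun j p => by simp [unfold2, hTp]; ring)
    have r3 : (unfold3 T).rank ≤ 1 :=
      rank_le_one_of_outer _ (c 0) (fun p => a 0 p.1 * b 0 p.2)
        (fun k p => by simp [unfold3, hTp]; ring)
    omega
  have hmem := Nat.sInf_mem (⟨2, h2⟩ : Set.Nonempty {r : ℕ | ∃ a b c : Fin r → Fin 2 → ℝ,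
      T = fun i j k => ∑ l, a l i * b l j * c l k})
  refine le_antisymm (Nat.sInf_le h2) ?_
  unfold tensorRank
  rcases Nat.lt_or_ge (sInf {r : ℕ | ∃ a b c : Fin r → Fin 2 → ℝ,
      T = fun i j k => ∑ l, a l i * b l j * c l k}) 2 with hlt | hge
  · exfalso
    have h01 := Nat.le_of_lt_succ hlt
    rcases Nat.le_one_iff_eq_zero_or_eq_one.mp h01 with h | h <;> rw [h] at hmem
    · exact hn0 hmem
    · exact hn1 hmem
  · exact hge
end

section
/- Every 2×2×2 real tensor T can be transformed into one of the eight canonical forms G₃, G₂, D₃, D₂, D₂′, D₂″, D₁, D₀ by the multi-TTM action of invertible 2×2 matrices: there exist invertible 2×2 real matrices U, V, W and a canonical form G from the list such that T ×₁ U ×₂ V ×₃ W = G. -/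
set_option maxHeartbeats 1000000


/-- Canonical form `G₃`: `t111 = 1, t122 = −1, t221 = 1, t212 = 1`. -/
def G3 : Tensor222 := ![![![1, 0], ![0, -1]], ![![0, 1], ![1, 0]]]

/-- Canonical form `G₂`: `t111 = 1, t222 = 1`. -/
def G2 : Tensor222 := ![![![1, 0], ![0, 0]], ![![0, 0], ![0, 1]]]

/-- Canonical form `D₃`: `t111 = 1, t122 = 1, t212 = 1`. -/
def D3 : Tensor222 := ![![![1, 0], ![0, 1]], ![![0, 1], ![0, 0]]]

/-- Canonical form `D₂`: `t111 = 1, t221 = 1`. -/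
def D2 : Tensor222 := ![![![1, 0], ![0, 0]], ![![0, 0], ![1, 0]]]

/-- Canonical form `D₂′`: `t111 = 1, t122 = 1`. -/
def D2' : Tensor222 := ![![![1, 0], ![0, 1]], ![![0, 0], ![0, 0]]]

/-- Canonical form `D₂″`: `t111 = 1, t212 = 1`. -/
def D2'' : Tensor222 := ![![![1, 0], ![0, 0]], ![![0, 1], ![0, 0]]]

/-- Canonical form `D₁`: `t111 = 1`. -/
def D1 : Tensor222 := ![![![1, 0], ![0, 0]], ![![0, 0], ![0, 0]]]

/-- Canonical form `D₀`: the zero tensor. -/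
def D0 : Tensor222 := ![![![0, 0], ![0, 0]], ![![0, 0], ![0, 0]]]

/-! ### Auxiliary machinery -/

/-- Build a tensor from its eight entries (binary order `t_{ijk} ↦ a_{4i+2j+k}`). -/
def mkT (a0 a1 a2 a3 a4 a5 a6 a7 : ℝ) : Tensor222 :=
  ![![![a0,a1],![a2,a3]],![![a4,a5],![a6,a7]]]

lemma eq_mkT (T : Tensor222) : T = mkT (T 0 0 0) (T 0 0 1) (T 0 1 0) (T 0 1 1)
    (T 1 0 0) (T 1 0 1) (T 1 1 0) (T 1 1 1) := by
  funext i j k; fin_cases i <;> fin_cases j <;> fin_cases k <;> rfl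

lemma mkT_congr {a0 a1 a2 a3 a4 a5 a6 a7 b0 b1 b2 b3 b4 b5 b6 b7 : ℝ}
    (h0 : a0 = b0) (h1 : a1 = b1) (h2 : a2 = b2) (h3 : a3 = b3)
    (h4 : a4 = b4) (h5 : a5 = b5) (h6 : a6 = b6) (h7 : a7 = b7) :
    mkT a0 a1 a2 a3 a4 a5 a6 a7 = mkT b0 b1 b2 b3 b4 b5 b6 b7 := by
  rw [h0, h1, h2, h3, h4, h5, h6, h7]

/-- Equivalence by invertible multi-TTM. -/
def Eqv (T T' : Tensor222) : Prop :=
  ∃ U V W : Matrix (Fin 2) (Fin 2) ℝ,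
    IsUnit U.det ∧ IsUnit V.det ∧ IsUnit W.det ∧ ttm T U V W = T'

lemma ttm_one (T : Tensor222) : ttm T 1 1 1 = T := by
  funext i j k
  fin_cases i <;> fin_cases j <;> fin_cases k <;>
    simp [ttm, Fin.sum_univ_two, Matrix.one_apply]

lemma ttm_ttm (T : Tensor222) (U V W U' V' W' : Matrix (Fin 2) (Fin 2) ℝ) :
    ttm (ttm T U V W) U' V' W' = ttm T (U' * U) (V' * V) (W' * W) := by
  funext i j k
  fin_cases i <;> fin_cases j <;> fin_cases k <;>
    (simp [ttm, Fin.sum_univ_two, Matrix.mul_apply]; ring)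

lemma Eqv.refl (T : Tensor222) : Eqv T T :=
  ⟨1, 1, 1, by simp, by simp, by simp, ttm_one T⟩

lemma Eqv.trans {T T' T'' : Tensor222} (h : Eqv T T') (h' : Eqv T' T'') : Eqv T T'' := by
  obtain ⟨U, V, W, hU, hV, hW, he⟩ := h
  obtain ⟨U', V', W', hU', hV', hW', he'⟩ := h'
  refine ⟨U' * U, V' * V, W' * W, ?_, ?_, ?_, ?_⟩
  · rw [Matrix.det_mul]; exact hU'.mul hU
  · rw [Matrix.det_mul]; exact hV'.mul hV
  · rw [Matrix.det_mul]; exact hW'.mul hW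
  · rw [← ttm_ttm, he, he']

/-- `T` can be brought to canonical form. -/
def Good (T : Tensor222) : Prop := ∃ G ∈ [G3, G2, D3, D2, D2', D2'', D1, D0], Eqv T G

lemma Good.of_eqv {T T' : Tensor222} (h : Eqv T T') (h' : Good T') : Good T := by
  obtain ⟨G, hG, hE⟩ := h'
  exact ⟨G, hG, h.trans hE⟩

/-! Canonical forms as `mkT`. -/
lemma G3_mk : G3 = mkT 1 0 0 (-1) 0 1 1 0 := rfl
lemma G2_mk : G2 = mkT 1 0 0 0 0 0 0 1 := rfl
lemma D3_mk : D3 = mkT 1 0 0 1 0 1 0 0 := rfl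
lemma D2_mk : D2 = mkT 1 0 0 0 0 0 1 0 := rfl
lemma D2'_mk : D2' = mkT 1 0 0 1 0 0 0 0 := rfl
lemma D2''_mk : D2'' = mkT 1 0 0 0 0 1 0 0 := rfl
lemma D1_mk : D1 = mkT 1 0 0 0 0 0 0 0 := rfl

/-! ### The traceless case with `f ≠ 0` -/

/-- Traceless second slice, `f ≠ 0`: classify by the sign of `e² + f·g`. -/
lemma good_traceless_f (e f g : ℝ) (hf : f ≠ 0) : Good (mkT 1 e 0 f 0 g 1 (-e)) := by
  rcases lt_trichotomy (e * e + f * g) 0 with hΔ | hΔ | hΔ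
  · -- complex eigenvalues → G3
    set β := Real.sqrt (-(e * e + f * g)) with hβdef
    have hβ2 : β * β = -(e * e + f * g) := Real.mul_self_sqrt (by linarith)
    have hβ : β ≠ 0 := by
      intro h0; rw [h0] at hβ2; nlinarith
    have hgeq : g = (-(β*β) - e*e)/f := by
      field_simp; linear_combination hβ2
    rw [hgeq]
    refine ⟨G3, by simp, !![e/(f*β), 1/β; 1/f, 0], !![0, β; f, -e], !![1, 0; 0, 1/β],
      ?_, ?_, ?_, ?_⟩
    · rw [Matrix.det_fin_two_of, isUnit_iff_ne_zero]
      field_simp; simp [hf, hβ]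
    · rw [Matrix.det_fin_two_of, isUnit_iff_ne_zero]
      simp only [zero_mul, zero_sub, neg_ne_zero]
      exact mul_ne_zero hβ hf
    · rw [Matrix.det_fin_two_of, isUnit_iff_ne_zero]
      field_simp; simp [hβ]
    · rw [G3_mk]
      funext i j k
      fin_cases i <;> fin_cases j <;> fin_cases k <;>
        simp [ttm, mkT, Fin.sum_univ_two] <;> (try field_simp) <;> (try ring)
  · -- nilpotent → D3
    have hgeq : g = -(e*e)/f := by
      field_simp; linear_combination hΔ
    rw [hgeq]
    have step1 : Eqv (mkT 1 e 0 f 0 (-(e*e)/f) 1 (-e)) (mkT 1 0 0 1 0 0 1 0) := by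
      refine ⟨!![1/f, 0; e/f, 1], !![f, -e; 0, 1], 1, ?_, ?_, by simp, ?_⟩
      · rw [Matrix.det_fin_two_of, isUnit_iff_ne_zero]; field_simp; simp [hf]
      · rw [Matrix.det_fin_two_of, isUnit_iff_ne_zero]; simpa using hf
      · funext i j k
        fin_cases i <;> fin_cases j <;> fin_cases k <;>
          simp [ttm, mkT, Fin.sum_univ_two, Matrix.one_apply] <;> (try field_simp) <;> (try ring)
    have step2 : Eqv (mkT 1 0 0 1 0 0 1 0) D3 := by
      refine ⟨1, !![0,1;1,0], !![0,1;1,0], by simp, ?_, ?_, ?_⟩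
      · rw [Matrix.det_fin_two_of, isUnit_iff_ne_zero]; norm_num
      · rw [Matrix.det_fin_two_of, isUnit_iff_ne_zero]; norm_num
      · rw [D3_mk]
        funext i j k
        fin_cases i <;> fin_cases j <;> fin_cases k <;>
          simp [ttm, mkT, Fin.sum_univ_two, Matrix.one_apply]
    exact ⟨D3, by simp, step1.trans step2⟩
  · -- distinct real eigenvalues → G2
    set l := Real.sqrt (e * e + f * g) with hldef
    have hl2 : l * l = e * e + f * g := Real.mul_self_sqrt (by linarith)
    have hl : l ≠ 0 := by
      intro h0; rw [h0] at hl2; nlinarith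
    have hgeq : g = (l*l - e*e)/f := by
      field_simp; linear_combination -hl2
    rw [hgeq]
    refine ⟨G2, by simp,
      !![(l+e)/(2*f*l), 1/(2*l); (l-e)/(2*f*l), -(1/(2*l))],
      !![f, l-e; f, -l-e], !![1/2, 1/(2*l); 1/2, -(1/(2*l))], ?_, ?_, ?_, ?_⟩
    · rw [Matrix.det_fin_two_of,
        show (l+e)/(2*f*l) * -(1/(2*l)) - 1/(2*l) * ((l-e)/(2*f*l)) = -(1/(2*f*l)) from by
          field_simp; ring, isUnit_iff_ne_zero]
      exact neg_ne_zero.2 (one_div_ne_zero (mul_ne_zero (mul_ne_zero two_ne_zero hf) hl))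
    · rw [Matrix.det_fin_two_of, isUnit_iff_ne_zero]
      intro h0
      rw [show f * (-l - e) - (l - e) * f = -(2 * (f * l)) by ring, neg_eq_zero] at h0
      rcases mul_eq_zero.1 h0 with h | h
      · norm_num at h
      · exact absurd h (mul_ne_zero hf hl)
    · rw [Matrix.det_fin_two_of,
        show (1:ℝ)/2 * -(1/(2*l)) - 1/(2*l) * (1/2) = -(1/(2*l)) from by field_simp; ring,
        isUnit_iff_ne_zero]
      exact neg_ne_zero.2 (one_div_ne_zero (mul_ne_zero two_ne_zero hl))
    · rw [G2_mk]
      funext i j k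
      fin_cases i <;> fin_cases j <;> fin_cases k <;>
        simp [ttm, mkT, Fin.sum_univ_two] <;> (try field_simp) <;> (try ring)

/-! ### The traceless case, general -/

lemma good_traceless (e f g : ℝ) : Good (mkT 1 e 0 f 0 g 1 (-e)) := by
  by_cases hf : f = 0
  · subst hf
    by_cases hg : g = 0
    · subst hg
      by_cases he : e = 0
      · subst he
        refine ⟨D2, by simp, ?_⟩
        rw [show mkT 1 0 0 0 0 0 1 (-0) = D2 from by norm_num [D2_mk]]
        exact Eqv.refl D2
      · -- diagonal, e ≠ 0 → G2
        refine ⟨G2, by simp, 1, 1, !![1/2, 1/(2*e); 1/2, -(1/(2*e))], by simp, by simp, ?_, ?_⟩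
        · rw [Matrix.det_fin_two_of,
            show (1:ℝ)/2 * -(1/(2*e)) - 1/(2*e) * (1/2) = -(1/(2*e)) from by field_simp; ring,
            isUnit_iff_ne_zero]
          exact neg_ne_zero.2 (one_div_ne_zero (mul_ne_zero two_ne_zero he))
        · rw [G2_mk]
          funext i j k
          fin_cases i <;> fin_cases j <;> fin_cases k <;>
            simp [ttm, mkT, Fin.sum_univ_two, Matrix.one_apply] <;> (try field_simp) <;> (try ring)
    · -- swap to put g in the f position
      have step : Eqv (mkT 1 e 0 0 0 g 1 (-e)) (mkT 1 (-e) 0 g 0 0 1 (-(-e))) := by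
        refine ⟨!![0,1;1,0], !![0,1;1,0], 1, ?_, ?_, by simp, ?_⟩
        · rw [Matrix.det_fin_two_of, isUnit_iff_ne_zero]; norm_num
        · rw [Matrix.det_fin_two_of, isUnit_iff_ne_zero]; norm_num
        · funext i j k
          fin_cases i <;> fin_cases j <;> fin_cases k <;>
            simp [ttm, mkT, Fin.sum_univ_two, Matrix.one_apply] <;> ring
      exact Good.of_eqv step (good_traceless_f (-e) g 0 hg)
  · exact good_traceless_f e f g hf

/-! ### The case of an invertible slice: `(I, M)` -/

lemma good_IM (m0 m1 m2 m3 : ℝ) : Good (mkT 1 m0 0 m1 0 m2 1 m3) := by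
  have step : Eqv (mkT 1 m0 0 m1 0 m2 1 m3)
      (mkT 1 ((m0-m3)/2) 0 m1 0 m2 1 (-((m0-m3)/2))) := by
    refine ⟨1, 1, !![1, 0; -((m0+m3)/2), 1], by simp, by simp, ?_, ?_⟩
    · rw [Matrix.det_fin_two_of, isUnit_iff_ne_zero]; norm_num
    · funext i j k
      fin_cases i <;> fin_cases j <;> fin_cases k <;>
        simp [ttm, mkT, Fin.sum_univ_two, Matrix.one_apply] <;> ring
  exact Good.of_eqv step (good_traceless ((m0-m3)/2) m1 m2)

/-! ### The normalized case: slices `([[1,0],[0,p]], [[0,q],[r,s]])` -/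

lemma good_normal (q r p s : ℝ) : Good (mkT 1 0 0 q 0 r p s) := by
  by_cases hp : p = 0
  · subst hp
    by_cases hs : s = 0
    · subst hs
      by_cases hq : q = 0
      · subst hq
        by_cases hr : r = 0
        · subst hr
          refine ⟨D1, by simp, ?_⟩
          rw [← D1_mk]
          exact Eqv.refl D1
        · -- D2''
          refine ⟨D2'', by simp, !![1, 0; 0, 1/r], 1, 1, ?_, by simp, by simp, ?_⟩
          · rw [Matrix.det_fin_two_of, isUnit_iff_ne_zero]; field_simp; simp [hr]
          · rw [D2''_mk]
            funext i j k
            fin_cases i <;> fin_cases j <;> fin_cases k <;>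
              simp [ttm, mkT, Fin.sum_univ_two, Matrix.one_apply] <;> (try field_simp)
      · by_cases hr : r = 0
        · subst hr
          -- D2'
          refine ⟨D2', by simp, 1, !![1, 0; 0, 1/q], 1, by simp, ?_, by simp, ?_⟩
          · rw [Matrix.det_fin_two_of, isUnit_iff_ne_zero]; field_simp; simp [hq]
          · rw [D2'_mk]
            funext i j k
            fin_cases i <;> fin_cases j <;> fin_cases k <;>
              simp [ttm, mkT, Fin.sum_univ_two, Matrix.one_apply] <;> (try field_simp)
        · -- q ≠ 0, r ≠ 0 : mix to invertible slice
          have step : Eqv (mkT 1 0 0 q 0 r 0 0) (mkT 1 0 0 0 0 (1/q) 1 0) := by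
            refine ⟨!![0, 1/r; 1/q, -(1/(q*r))], 1, !![1,1;1,0], ?_, by simp, ?_, ?_⟩
            · rw [Matrix.det_fin_two_of, isUnit_iff_ne_zero]; field_simp; simp [hq, hr]
            · rw [Matrix.det_fin_two_of, isUnit_iff_ne_zero]; norm_num
            · funext i j k
              fin_cases i <;> fin_cases j <;> fin_cases k <;>
                simp [ttm, mkT, Fin.sum_univ_two, Matrix.one_apply] <;> (try field_simp) <;> (try ring)
          exact Good.of_eqv step (good_IM 0 0 (1/q) 0)
    · -- s ≠ 0 : mix to invertible slice
      have step : Eqv (mkT 1 0 0 q 0 r 0 s) (mkT 1 s 0 0 0 (-r) 1 0) := by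
        refine ⟨!![s, -q; -r, (q*r+1)/s], 1, !![(q*r+1)/s, 1; 1, 0], ?_, by simp, ?_, ?_⟩
        · rw [Matrix.det_fin_two_of, isUnit_iff_ne_zero]
          intro h0
          have h1 : s * ((q*r+1)/s) - -q * -r = 1 := by field_simp; try ring
          rw [h0] at h1; norm_num at h1
        · rw [Matrix.det_fin_two_of, isUnit_iff_ne_zero]; norm_num
        · funext i j k
          fin_cases i <;> fin_cases j <;> fin_cases k <;>
            simp [ttm, mkT, Fin.sum_univ_two, Matrix.one_apply] <;> (try field_simp) <;> (try ring)
      exact Good.of_eqv step (good_IM s 0 (-r) 0)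
  · -- p ≠ 0 : slice A invertible
    have step : Eqv (mkT 1 0 0 q 0 r p s) (mkT 1 0 0 q 0 (r/p) 1 (s/p)) := by
      refine ⟨!![1, 0; 0, 1/p], 1, 1, ?_, by simp, by simp, ?_⟩
      · rw [Matrix.det_fin_two_of, isUnit_iff_ne_zero]; field_simp; simp [hp]
      · funext i j k
        fin_cases i <;> fin_cases j <;> fin_cases k <;>
          simp [ttm, mkT, Fin.sum_univ_two, Matrix.one_apply] <;> (try field_simp) <;> (try ring)
    exact Good.of_eqv step (good_IM 0 q (r/p) (s/p))

/-! ### Normalization: a tensor with `T 0 0 0 ≠ 0` -/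

lemma good_of_000 (T : Tensor222) (h : T 0 0 0 ≠ 0) : Good T := by
  set a := T 0 0 0 with ha
  set U : Matrix (Fin 2) (Fin 2) ℝ := !![1/a, 0; -(T 1 0 0)/a, 1] with hU
  set V : Matrix (Fin 2) (Fin 2) ℝ := !![1, 0; -(T 0 1 0)/a, 1] with hV
  set W : Matrix (Fin 2) (Fin 2) ℝ := !![1, 0; -(T 0 0 1)/a, 1] with hW
  set T' := ttm T U V W with hT'
  have step : Eqv T (mkT 1 0 0 (T' 0 1 1) 0 (T' 1 0 1) (T' 1 1 0) (T' 1 1 1)) := by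
    refine ⟨U, V, W, ?_, ?_, ?_, ?_⟩
    · rw [hU, Matrix.det_fin_two_of, isUnit_iff_ne_zero]; field_simp; simp [h]
    · rw [hV, Matrix.det_fin_two_of, isUnit_iff_ne_zero]; norm_num
    · rw [hW, Matrix.det_fin_two_of, isUnit_iff_ne_zero]; norm_num
    · rw [← hT', eq_mkT T']
      refine mkT_congr ?_ ?_ ?_ rfl ?_ rfl rfl rfl
      · show T' 0 0 0 = 1
        rw [hT']; simp [ttm, Fin.sum_univ_two, hU, hV, hW]; field_simp; exact ha.symm
      · show T' 0 0 1 = 0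
        rw [hT']; simp [ttm, Fin.sum_univ_two, hU, hV, hW]; field_simp <;> ring
      · show T' 0 1 0 = 0
        rw [hT']; simp [ttm, Fin.sum_univ_two, hU, hV, hW]; field_simp <;> ring
      · show T' 1 0 0 = 0
        rw [hT']; simp [ttm, Fin.sum_univ_two, hU, hV, hW]; field_simp <;> ring
  exact Good.of_eqv step (good_normal (T' 0 1 1) (T' 1 0 1) (T' 1 1 0) (T' 1 1 1))

/-! ### Moving a nonzero entry to position `(0,0,0)` -/

def permM : Fin 2 → Matrix (Fin 2) (Fin 2) ℝ := ![1, !![0,1;1,0]]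

lemma permM_det (i : Fin 2) : IsUnit (permM i).det := by
  fin_cases i
  · simp [permM]
  · show IsUnit (!![(0:ℝ),1;1,0]).det
    rw [Matrix.det_fin_two_of, isUnit_iff_ne_zero]
    norm_num

lemma ttm_perm_entry (T : Tensor222) (i j k : Fin 2) :
    ttm T (permM i) (permM j) (permM k) 0 0 0 = T i j k := by
  fin_cases i <;> fin_cases j <;> fin_cases k <;>
    simp [ttm, permM, Fin.sum_univ_two, Matrix.one_apply]

/-! ### Main theorem -/

/-- Every `2 × 2 × 2` real tensor can be brought to one of the eight canonical forms by
the multi-TTM action of invertible matrices. -/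
theorem exists_canonical_form (T : Tensor222) :
    ∃ G ∈ [G3, G2, D3, D2, D2', D2'', D1, D0],
      ∃ U V W : Matrix (Fin 2) (Fin 2) ℝ,
        IsUnit U.det ∧ IsUnit V.det ∧ IsUnit W.det ∧ ttm T U V W = G := by
  have hgood : Good T := by
    by_cases h : ∀ i j k, T i j k = 0
    · have hT : T = D0 := by
        funext i j k
        rw [h i j k]
        fin_cases i <;> fin_cases j <;> fin_cases k <;> rfl
      exact ⟨D0, by simp, by rw [hT]; exact Eqv.refl D0⟩
    · push_neg at h
      obtain ⟨i, j, k, hijk⟩ := h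
      have step : Eqv T (ttm T (permM i) (permM j) (permM k)) :=
        ⟨permM i, permM j, permM k, permM_det i, permM_det j, permM_det k, rfl⟩
      refine Good.of_eqv step (good_of_000 _ ?_)
      rw [ttm_perm_entry]
      exact hijk
  obtain ⟨G, hG, U, V, W, hU, hV, hW, he⟩ := hgood
  exact ⟨G, hG, U, V, W, hU, hV, hW, he⟩
end

section
/- Both ranks 2 and 3 are typical for 2×2×2 real tensors: the set {T : rank(T) = 2} and the set {T : rank(T) = 3} each have nonempty interior in the space of 2×2×2 real tensors (with its Euclidean topology). -/
namespace TensorTypicalAux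

/-- Determinant of the first slice (first index `0`). -/
def d0 (T : Tensor222) : ℝ := T 0 0 0 * T 0 1 1 - T 0 0 1 * T 0 1 0

/-- Determinant of the second slice (first index `1`). -/
def d1 (T : Tensor222) : ℝ := T 1 0 0 * T 1 1 1 - T 1 0 1 * T 1 1 0

/-- Mixed term of the pencil determinant. -/
def mm (T : Tensor222) : ℝ :=
  T 0 0 0 * T 1 1 1 + T 0 1 1 * T 1 0 0 - T 0 0 1 * T 1 1 0 - T 0 1 0 * T 1 0 1

/-- Discriminant (hyperdeterminant up to sign) of the pencil. -/
def disc (T : Tensor222) : ℝ := mm T ^ 2 - 4 * d0 T * d1 T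

noncomputable def r1 (T : Tensor222) : ℝ :=
  2 * d0 T * T 1 0 0 - (mm T - Real.sqrt (disc T)) * T 0 0 0

noncomputable def r2 (T : Tensor222) : ℝ :=
  (mm T + Real.sqrt (disc T)) * T 0 0 0 - 2 * d0 T * T 1 0 0

def Dd (T : Tensor222) : ℝ := T 0 0 0 * T 1 1 1 - T 0 1 0 * T 1 0 1

lemma cont_eval (i j k : Fin 2) : Continuous fun T : Tensor222 => T i j k :=
  (continuous_apply k).comp ((continuous_apply j).comp (continuous_apply i))

lemma cont_d0 : Continuous d0 := by unfold d0; fun_prop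
lemma cont_disc : Continuous disc := by unfold disc mm d0 d1; fun_prop
lemma cont_Dd : Continuous Dd := by unfold Dd; fun_prop
lemma cont_r1 : Continuous r1 := by
  unfold r1 mm
  have := cont_disc
  have := cont_d0
  fun_prop
lemma cont_r2 : Continuous r2 := by
  unfold r2 mm
  have := cont_disc
  have := cont_d0
  fun_prop

lemma rank1_fact (P : Fin 2 → Fin 2 → ℝ) (h00 : P 0 0 ≠ 0)
    (hdet : P 0 0 * P 1 1 = P 0 1 * P 1 0) :
    ∃ p q : Fin 2 → ℝ, ∀ j k, P j k = p j * q k := by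
  refine ⟨![P 0 0, P 1 0], ![1, P 0 1 / P 0 0], fun j k => ?_⟩
  fin_cases j <;> fin_cases k <;>
    simp only [Fin.zero_eta, Fin.mk_one, Matrix.cons_val_zero, Matrix.cons_val_one, Matrix.head_cons, Fin.isValue] <;>
    field_simp
  linear_combination hdet

lemma mem_two (T : Tensor222) (u0 u1 v0 v1 : ℝ) (p q p' q' : Fin 2 → ℝ)
    (h0 : ∀ j k, T 0 j k = u0 * (p j * p' k) + v0 * (q j * q' k))
    (h1 : ∀ j k, T 1 j k = u1 * (p j * p' k) + v1 * (q j * q' k)) :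
    ∃ a b c : Fin 2 → Fin 2 → ℝ,
      T = fun i j k => ∑ l, a l i * b l j * c l k := by
  refine ⟨![![u0, u1], ![v0, v1]], ![p, q], ![p', q'], ?_⟩
  funext i j k
  fin_cases i <;>
    simp only [Fin.sum_univ_two, Fin.mk_zero, Fin.mk_one, Matrix.cons_val_zero,
      Matrix.cons_val_one, Matrix.head_cons, Fin.isValue]
  · linear_combination h0 j k
  · linear_combination h1 j k

/-- On the region `disc > 0` (with suitable nondegeneracies), an explicit rank-2
decomposition exists. -/
lemma two_mem (T : Tensor222) (hdisc : 0 < disc T) (hd0 : d0 T ≠ 0)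
    (h1 : r1 T ≠ 0) (h2 : r2 T ≠ 0) :
    ∃ a b c : Fin 2 → Fin 2 → ℝ,
      T = fun i j k => ∑ l, a l i * b l j * c l k := by
  set s : ℝ := Real.sqrt (disc T) with hs_def
  have hs2 : s ^ 2 = disc T := Real.sq_sqrt hdisc.le
  have hspos : 0 < s := Real.sqrt_pos.2 hdisc
  set R1 : Fin 2 → Fin 2 → ℝ := fun j k => 2 * d0 T * T 1 j k - (mm T - s) * T 0 j k with hR1
  set R2 : Fin 2 → Fin 2 → ℝ := fun j k => (mm T + s) * T 0 j k - 2 * d0 T * T 1 j k with hR2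
  have hR100 : R1 0 0 ≠ 0 := h1
  have hR200 : R2 0 0 ≠ 0 := h2
  have hs2' : s ^ 2 = mm T ^ 2 - 4 * d0 T * d1 T := by rw [hs2]; rfl
  have hdet1 : R1 0 0 * R1 1 1 = R1 0 1 * R1 1 0 := by
    simp only [hR1]
    simp only [mm, d0, d1] at hs2' ⊢
    linear_combination (T 0 0 0 * T 0 1 1 - T 0 0 1 * T 0 1 0) * hs2'
  have hdet2 : R2 0 0 * R2 1 1 = R2 0 1 * R2 1 0 := by
    simp only [hR2]
    simp only [mm, d0, d1] at hs2' ⊢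
    linear_combination (T 0 0 0 * T 0 1 1 - T 0 0 1 * T 0 1 0) * hs2'
  obtain ⟨p, p', hp⟩ := rank1_fact R1 hR100 hdet1
  obtain ⟨q, q', hq⟩ := rank1_fact R2 hR200 hdet2
  refine mem_two T (1 / (2 * s)) ((mm T + s) / (4 * s * d0 T))
    (1 / (2 * s)) ((mm T - s) / (4 * s * d0 T)) p q p' q' ?_ ?_
  · intro j k
    rw [← hp j k, ← hq j k]
    simp only [hR1, hR2]
    field_simp
    ring
  · intro j k
    rw [← hp j k, ← hq j k]
    simp only [hR1, hR2]
    field_simp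
    ring

/-- On the region `Dd ≠ 0`, `T 1 0 1 ≠ 0`, an explicit rank-3 decomposition exists. -/
lemma three_mem (T : Tensor222) (hD : Dd T ≠ 0) (h101 : T 1 0 1 ≠ 0) :
    ∃ a b c : Fin 3 → Fin 2 → ℝ,
      T = fun i j k => ∑ l, a l i * b l j * c l k := by
  obtain ⟨lam, hlam⟩ : ∃ l : ℝ, l * (T 0 0 0 * T 1 1 1 - T 0 1 0 * T 1 0 1)
      = T 1 0 0 * T 1 1 1 - T 1 0 1 * T 1 1 0 := by
    refine ⟨(T 1 0 0 * T 1 1 1 - T 1 0 1 * T 1 1 0) / (T 0 0 0 * T 1 1 1 - T 0 1 0 * T 1 0 1), ?_⟩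
    have : T 0 0 0 * T 1 1 1 - T 0 1 0 * T 1 0 1 ≠ 0 := hD
    exact div_mul_cancel₀ _ this
  obtain ⟨mu, hmu⟩ : ∃ m : ℝ, m * T 1 0 1 = T 1 0 0 - lam * T 0 0 0 :=
    ⟨(T 1 0 0 - lam * T 0 0 0) / T 1 0 1, by field_simp⟩
  have h110 : T 1 1 0 = lam * T 0 1 0 + mu * T 1 1 1 := by
    apply mul_right_cancel₀ h101
    linear_combination hlam - T 1 1 1 * hmu
  refine ⟨![![1, lam], ![1, 0], ![0, 1]],
    ![![T 0 0 0, T 0 1 0], ![T 0 0 1, T 0 1 1], ![T 1 0 1, T 1 1 1]],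
    ![![1, 0], ![0, 1], ![mu, 1]], ?_⟩
  funext i j k
  fin_cases i <;> fin_cases j <;> fin_cases k <;>
    simp [Fin.sum_univ_three, Matrix.vecHead, Matrix.vecTail]
  all_goals first
    | linear_combination -hmu
    | linear_combination h110

/-- Any decomposition with at most one term forces `d0 = 0`. -/
lemma d0_eq_zero {n : ℕ} (hn : n ≤ 1) (a b c : Fin n → Fin 2 → ℝ) :
    d0 (fun i j k => ∑ l, a l i * b l j * c l k) = 0 := by
  interval_cases n
  · simp [d0]
  · simp only [d0, Fin.sum_univ_one]
    ring

/-- Any decomposition with at most two terms forces `disc ≥ 0`. -/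
lemma disc_nonneg {n : ℕ} (hn : n ≤ 2) (a b c : Fin n → Fin 2 → ℝ) :
    0 ≤ disc (fun i j k => ∑ l, a l i * b l j * c l k) := by
  interval_cases n
  · simp [disc, mm, d0, d1]
  · simp only [disc, mm, d0, d1, Fin.sum_univ_one]
    nlinarith []
  · simp only [disc, mm, d0, d1, Fin.sum_univ_two]
    nlinarith [sq_nonneg ((a 0 0 * a 1 1 - a 0 1 * a 1 0) * (b 0 0 * b 1 1 - b 0 1 * b 1 0) *
      (c 0 0 * c 1 1 - c 0 1 * c 1 0))]

/-- On the rank-2 region the rank is exactly 2. -/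
lemma rank_eq_two (T : Tensor222) (hdisc : 0 < disc T) (hd0 : d0 T ≠ 0)
    (h1 : r1 T ≠ 0) (h2 : r2 T ≠ 0) : tensorRank T = 2 := by
  obtain ⟨a, b, c, hT⟩ := two_mem T hdisc hd0 h1 h2
  have h2mem : 2 ∈ {r : ℕ | ∃ a b c : Fin r → Fin 2 → ℝ,
      T = fun i j k => ∑ l, a l i * b l j * c l k} := ⟨a, b, c, hT⟩
  have hle : tensorRank T ≤ 2 := Nat.sInf_le h2mem
  rcases Nat.lt_or_ge (tensorRank T) 2 with h | h
  · exfalso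
    have hmem : tensorRank T ∈ {r : ℕ | ∃ a b c : Fin r → Fin 2 → ℝ,
        T = fun i j k => ∑ l, a l i * b l j * c l k} := Nat.sInf_mem ⟨2, h2mem⟩
    obtain ⟨a', b', c', hT'⟩ := hmem
    apply hd0
    rw [hT']
    exact d0_eq_zero (Nat.lt_succ_iff.mp h) a' b' c'
  · exact le_antisymm hle h

/-- On the rank-3 region the rank is exactly 3. -/
lemma rank_eq_three (T : Tensor222) (hdisc : disc T < 0) (hD : Dd T ≠ 0)
    (h101 : T 1 0 1 ≠ 0) : tensorRank T = 3 := by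
  obtain ⟨a, b, c, hT⟩ := three_mem T hD h101
  have h3mem : 3 ∈ {r : ℕ | ∃ a b c : Fin r → Fin 2 → ℝ,
      T = fun i j k => ∑ l, a l i * b l j * c l k} := ⟨a, b, c, hT⟩
  have hle : tensorRank T ≤ 3 := Nat.sInf_le h3mem
  rcases Nat.lt_or_ge (tensorRank T) 3 with h | h
  · exfalso
    have hmem : tensorRank T ∈ {r : ℕ | ∃ a b c : Fin r → Fin 2 → ℝ,
        T = fun i j k => ∑ l, a l i * b l j * c l k} := Nat.sInf_mem ⟨3, h3mem⟩
    obtain ⟨a', b', c', hT'⟩ := hmem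
    have := disc_nonneg (Nat.lt_succ_iff.mp h) a' b' c'
    rw [← hT'] at this
    linarith
  · exact le_antisymm hle h

/-- The rank-2 base point. -/
noncomputable def T2 : Tensor222 := ![![![1, 0], ![0, 1]], ![![1, 1], ![1, 2]]]

/-- The rank-3 base point. -/
noncomputable def T3 : Tensor222 := ![![![1, 0], ![0, 1]], ![![0, 1], ![-1, 1]]]

end TensorTypicalAux

open TensorTypicalAux in
/-- Ranks 2 and 3 are both typical for `2 × 2 × 2` real tensors: the sets of rank-2 and
rank-3 tensors each have nonempty interior. -/
theorem rank_two_and_three_typical :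
    (interior {T : Tensor222 | tensorRank T = 2}).Nonempty ∧
    (interior {T : Tensor222 | tensorRank T = 3}).Nonempty := by
  constructor
  · -- rank 2
    have hopen : IsOpen {T : Tensor222 | 0 < disc T ∧ d0 T ≠ 0 ∧ r1 T ≠ 0 ∧ r2 T ≠ 0} := by
      refine IsOpen.inter (isOpen_lt continuous_const cont_disc) ?_
      refine IsOpen.inter (isOpen_compl_singleton.preimage cont_d0) ?_
      exact IsOpen.inter (isOpen_compl_singleton.preimage cont_r1)
        (isOpen_compl_singleton.preimage cont_r2)
    have hsub : {T : Tensor222 | 0 < disc T ∧ d0 T ≠ 0 ∧ r1 T ≠ 0 ∧ r2 T ≠ 0}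
        ⊆ {T : Tensor222 | tensorRank T = 2} := fun T hT =>
      rank_eq_two T hT.1 hT.2.1 hT.2.2.1 hT.2.2.2
    refine ⟨T2, interior_mono hsub (hopen.subset_interior_iff.mpr subset_rfl ?_)⟩
    -- membership of T2
    have e000 : T2 0 0 0 = 1 := rfl
    have e001 : T2 0 0 1 = 0 := rfl
    have e010 : T2 0 1 0 = 0 := rfl
    have e011 : T2 0 1 1 = 1 := rfl
    have e100 : T2 1 0 0 = 1 := rfl
    have e101 : T2 1 0 1 = 1 := rfl
    have e110 : T2 1 1 0 = 1 := rfl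
    have e111 : T2 1 1 1 = 2 := rfl
    have hd0 : d0 T2 = 1 := by norm_num [d0, e000, e001, e010, e011]
    have hd1 : d1 T2 = 1 := by norm_num [d1, e100, e101, e110, e111]
    have hmm : mm T2 = 3 := by
      norm_num [mm, e000, e001, e010, e011, e100, e101, e110, e111]
    have hdisc : disc T2 = 5 := by norm_num [disc, hd0, hd1, hmm]
    have hsqrt : 1 < Real.sqrt (disc T2) := by
      rw [hdisc]
      nlinarith [Real.sq_sqrt (by norm_num : (5:ℝ) ≥ 0), Real.sqrt_nonneg 5]
    refine ⟨by rw [hdisc]; norm_num, by rw [hd0]; norm_num, ?_, ?_⟩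
    · unfold r1
      rw [hd0, hmm, e100, e000]
      intro h
      nlinarith
    · unfold r2
      rw [hd0, hmm, e100, e000]
      intro h
      nlinarith [Real.sqrt_nonneg (disc T2)]
  · -- rank 3
    have hopen : IsOpen {T : Tensor222 | disc T < 0 ∧ Dd T ≠ 0 ∧ T 1 0 1 ≠ 0} := by
      refine IsOpen.inter (isOpen_lt cont_disc continuous_const) ?_
      exact IsOpen.inter (isOpen_compl_singleton.preimage cont_Dd)
        (isOpen_compl_singleton.preimage (cont_eval 1 0 1))
    have hsub : {T : Tensor222 | disc T < 0 ∧ Dd T ≠ 0 ∧ T 1 0 1 ≠ 0}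
        ⊆ {T : Tensor222 | tensorRank T = 3} := fun T hT =>
      rank_eq_three T hT.1 hT.2.1 hT.2.2
    refine ⟨T3, interior_mono hsub (hopen.subset_interior_iff.mpr subset_rfl ?_)⟩
    have e000 : T3 0 0 0 = 1 := rfl
    have e001 : T3 0 0 1 = 0 := rfl
    have e010 : T3 0 1 0 = 0 := rfl
    have e011 : T3 0 1 1 = 1 := rfl
    have e100 : T3 1 0 0 = 0 := rfl
    have e101 : T3 1 0 1 = 1 := rfl
    have e110 : T3 1 1 0 = -1 := rfl
    have e111 : T3 1 1 1 = 1 := rfl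
    have hd0 : d0 T3 = 1 := by norm_num [d0, e000, e001, e010, e011]
    have hd1 : d1 T3 = 1 := by norm_num [d1, e100, e101, e110, e111]
    have hmm : mm T3 = 1 := by
      norm_num [mm, e000, e001, e010, e011, e100, e101, e110, e111]
    have hdisc : disc T3 = -3 := by norm_num [disc, hd0, hd1, hmm]
    have hD : Dd T3 = 1 := by norm_num [Dd, e000, e010, e101, e111]
    refine ⟨by rw [hdisc]; norm_num, by rw [hD]; norm_num, by rw [e101]; norm_num⟩
end

section
/- Every tensor in the orbit D₃ has border rank 2 but rank 3: if T = G ×₁ U ×₂ V ×₃ W where G is the D₃ canonical form (entries t111=1, t122=1, t212=1, all others zero) and U, V, W are invertible 2×2 real matrices, then rank(T) = 3 and T lies in the closure of the set of 2×2×2 real tensors of rank at most 2. -/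
/- ### Auxiliary lemmas -/

lemma ttm_decomp {r : ℕ} (a b c : Fin r → Fin 2 → ℝ) (U V W : Matrix (Fin 2) (Fin 2) ℝ) :
    ttm (fun i j k => ∑ l, a l i * b l j * c l k) U V W =
    fun α β γ => ∑ l, (∑ i, U α i * a l i) * (∑ j, V β j * b l j) * (∑ k, W γ k * c l k) := by
  funext α β γ
  simp only [ttm, Fin.sum_univ_two, Finset.mul_sum, ← Finset.sum_add_distrib]
  exact Finset.sum_congr rfl fun l _ => by ring

/-- `D3` has no rank-two (or smaller) decomposition. -/
lemma no_two (a b c : Fin 2 → Fin 2 → ℝ) :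
    D3 ≠ fun i j k => ∑ l, a l i * b l j * c l k := by
  intro h
  have E : ∀ i j k : Fin 2, D3 i j k = a 0 i * b 0 j * c 0 k + a 1 i * b 1 j * c 1 k := by
    intro i j k
    have := congr_fun (congr_fun (congr_fun h i) j) k
    simpa [Fin.sum_univ_two] using this
  set p0 := a 0 0; set p1 := a 1 0; set q0 := a 0 1; set q1 := a 1 1
  set r0 := b 0 0; set r1 := b 1 0; set s0 := b 0 1; set s1 := b 1 1
  set u0 := c 0 0; set u1 := c 1 0; set v0 := c 0 1; set v1 := c 1 1
  have e1 : p0*r0*u0 + p1*r1*u1 = 1 := by have := E 0 0 0; simp [D3] at this; linear_combination -this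
  have e2 : p0*r0*v0 + p1*r1*v1 = 0 := by have := E 0 0 1; simp [D3] at this; linear_combination -this
  have e3 : p0*s0*u0 + p1*s1*u1 = 0 := by have := E 0 1 0; simp [D3] at this; linear_combination -this
  have e4 : p0*s0*v0 + p1*s1*v1 = 1 := by have := E 0 1 1; simp [D3] at this; linear_combination -this
  have e5 : q0*r0*u0 + q1*r1*u1 = 0 := by have := E 1 0 0; simp [D3] at this; linear_combination -this
  have e6 : q0*r0*v0 + q1*r1*v1 = 1 := by have := E 1 0 1; simp [D3] at this; linear_combination -this
  have e7 : q0*s0*u0 + q1*s1*u1 = 0 := by have := E 1 1 0; simp [D3] at this; linear_combination -this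
  have e8 : q0*s0*v0 + q1*s1*v1 = 0 := by have := E 1 1 1; simp [D3] at this; linear_combination -this
  set f : ℝ := r0*u0*s1*v1 + r1*u1*s0*v0 - r0*v0*s1*u1 - r1*v1*s0*u0 with hf
  have h1 : p0*p1*f = 1 := by
    linear_combination (p0*s0*v0 + p1*s1*v1) * e1 - (p0*s0*u0 + p1*s1*u1) * e2 + e4
  have h2 : q0*q1*f = 0 := by
    linear_combination (q0*s0*v0 + q1*s1*v1) * e5 - (q0*r0*v0 + q1*r1*v1) * e7
  have h3 : (p0*q1 + p1*q0)*f = 0 := by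
    linear_combination (p0*r0*u0 + p1*r1*u1) * e8 + (p0*s0*v0 + p1*s1*v1) * e5
      - (q0*s0*u0 + q1*s1*u1) * e2 - (q0*r0*v0 + q1*r1*v1) * e3
  have hq1 : q1 = 0 := by
    have : q1^2 = 0 := by linear_combination (-(q1^2)) * h1 + p1*q1*h3 - p1^2*h2
    exact pow_eq_zero_iff two_ne_zero |>.mp this
  have hq0 : q0 = 0 := by
    have : q0^2 = 0 := by linear_combination (-(q0^2)) * h1 + p0*q0*h3 - p0^2*h2
    exact pow_eq_zero_iff two_ne_zero |>.mp this
  rw [hq0, hq1] at e6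
  norm_num at e6

/-- `D3` has no decomposition with at most two terms. -/
lemma no_small (r : ℕ) (hr : r ≤ 2) (a b c : Fin r → Fin 2 → ℝ) :
    D3 ≠ fun i j k => ∑ l, a l i * b l j * c l k := by
  interval_cases r
  · intro h
    have := congr_fun (congr_fun (congr_fun h 0) 0) 0
    simp [D3] at this
  · intro h
    refine no_two ![a 0, fun _ => 0] ![b 0, fun _ => 0] ![c 0, fun _ => 0] ?_
    rw [h]
    funext i j k
    simp [Fin.sum_univ_two]
  · exact no_two a b c

/- ### Border-rank approximants -/

noncomputable def Aε (ε : ℝ) : Fin 2 → Fin 2 → ℝ := ![![1/ε, 1], ![-(1/ε), 0]]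
def Bε (ε : ℝ) : Fin 2 → Fin 2 → ℝ := ![![1, ε], ![1, 0]]
def Cε (ε : ℝ) : Fin 2 → Fin 2 → ℝ := ![![ε, 1], ![0, 1]]
noncomputable def Eps (ε : ℝ) : Tensor222 := fun i j k => ∑ l, Aε ε l i * Bε ε l j * Cε ε l k

lemma Eps_entries (ε : ℝ) (hε : ε ≠ 0) :
    Eps ε = ![![![1, 0], ![ε, 1]], ![![ε, 1], ![ε^2, ε]]] := by
  funext i j k
  fin_cases i <;> fin_cases j <;> fin_cases k <;>
    · simp [Eps, Aε, Bε, Cε, Fin.sum_univ_two]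
      try field_simp
      try ring

lemma cont_ttm (U V W : Matrix (Fin 2) (Fin 2) ℝ) :
    Continuous fun S : Tensor222 => ttm S U V W := by
  unfold ttm
  refine continuous_pi fun α => continuous_pi fun β => continuous_pi fun γ => ?_
  refine continuous_finset_sum _ fun i _ => continuous_finset_sum _ fun j _ =>
    continuous_finset_sum _ fun k _ => ?_
  exact continuous_const.mul
    ((continuous_apply k).comp ((continuous_apply j).comp (continuous_apply i)))

lemma tendsto_Eps :
    Filter.Tendsto (fun n : ℕ => Eps (((n:ℝ)+1)⁻¹)) Filter.atTop (nhds D3) := by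
  have hne : ∀ n : ℕ, (((n:ℝ)+1)⁻¹) ≠ 0 := fun n => by positivity
  have h0 : Filter.Tendsto (fun n : ℕ => (((n:ℝ)+1)⁻¹)) Filter.atTop (nhds 0) := by
    simpa using (tendsto_one_div_add_atTop_nhds_zero_nat :
      Filter.Tendsto (fun n : ℕ => 1 / ((n:ℝ) + 1)) Filter.atTop (nhds 0))
  rw [tendsto_pi_nhds]; intro i
  rw [tendsto_pi_nhds]; intro j
  rw [tendsto_pi_nhds]; intro k
  have heq : ∀ n : ℕ, Eps (((n:ℝ)+1)⁻¹) i j k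
      = ![![![1, 0], ![((n:ℝ)+1)⁻¹, 1]], ![![((n:ℝ)+1)⁻¹, 1],
          ![(((n:ℝ)+1)⁻¹)^2, ((n:ℝ)+1)⁻¹]]] i j k := by
    intro n; rw [Eps_entries _ (hne n)]
  simp only [heq]
  fin_cases i <;> fin_cases j <;> fin_cases k <;> simp [D3] <;>
    first
      | exact tendsto_const_nhds
      | exact h0
      | simpa using h0.pow 2

/-- Every tensor in the orbit of `D₃` has rank 3 but border rank 2: it is a limit of
tensors of rank at most 2. -/
theorem D3_orbit_rank_three_border_rank_two (T : Tensor222)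
    (U V W : Matrix (Fin 2) (Fin 2) ℝ)
    (hU : IsUnit U.det) (hV : IsUnit V.det) (hW : IsUnit W.det)
    (hT : T = ttm D3 U V W) :
    tensorRank T = 3 ∧ T ∈ closure {S : Tensor222 | tensorRank S ≤ 2} := by
  -- an explicit rank-3 decomposition of D3
  have hD3dec : D3 = fun i j k => ∑ l : Fin 3,
      (![![(1:ℝ),0],![1,0],![0,1]]) l i * (![![(1:ℝ),0],![0,1],![1,0]]) l j *
      (![![(1:ℝ),0],![0,1],![0,1]]) l k := by
    funext i j k
    fin_cases i <;> fin_cases j <;> fin_cases k <;> simp [D3, Fin.sum_univ_three, Matrix.vecHead, Matrix.vecTail]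
  have hTdec : T = fun α β γ => ∑ l : Fin 3,
      (∑ i, U α i * (![![(1:ℝ),0],![1,0],![0,1]]) l i) *
      (∑ j, V β j * (![![(1:ℝ),0],![0,1],![1,0]]) l j) *
      (∑ k, W γ k * (![![(1:ℝ),0],![0,1],![0,1]]) l k) := by
    rw [hT, hD3dec, ttm_decomp]
  have h3mem : 3 ∈ {r : ℕ | ∃ a b c : Fin r → Fin 2 → ℝ,
      T = fun i j k => ∑ l, a l i * b l j * c l k} := ⟨_, _, _, hTdec⟩
  have hub : tensorRank T ≤ 3 := Nat.sInf_le h3mem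
  have hmem : tensorRank T ∈ {r : ℕ | ∃ a b c : Fin r → Fin 2 → ℝ,
      T = fun i j k => ∑ l, a l i * b l j * c l k} := Nat.sInf_mem ⟨3, h3mem⟩
  have hback : ttm T U⁻¹ V⁻¹ W⁻¹ = D3 := by
    rw [hT, ttm_ttm, Matrix.nonsing_inv_mul U hU, Matrix.nonsing_inv_mul V hV,
      Matrix.nonsing_inv_mul W hW, ttm_one]
  constructor
  · refine le_antisymm hub ?_
    by_contra hlt
    push_neg at hlt
    have h2 : tensorRank T ≤ 2 := by omega
    obtain ⟨a, b, c, hd⟩ := hmem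
    have hD3' : D3 = ttm T U⁻¹ V⁻¹ W⁻¹ := hback.symm
    rw [hd, ttm_decomp] at hD3'
    exact no_small _ h2 _ _ _ hD3'
  · have htt : Filter.Tendsto (fun n : ℕ => ttm (Eps (((n:ℝ)+1)⁻¹)) U V W)
        Filter.atTop (nhds T) := by
      rw [hT]
      exact ((cont_ttm U V W).tendsto D3).comp tendsto_Eps
    refine mem_closure_of_tendsto htt (Filter.Eventually.of_forall fun n => ?_)
    have hdec : ttm (Eps (((n:ℝ)+1)⁻¹)) U V W =
        fun α β γ => ∑ l : Fin 2,
          (∑ i, U α i * Aε (((n:ℝ)+1)⁻¹) l i) * (∑ j, V β j * Bε (((n:ℝ)+1)⁻¹) l j) *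
          (∑ k, W γ k * Cε (((n:ℝ)+1)⁻¹) l k) := by
      rw [show Eps (((n:ℝ)+1)⁻¹) = fun i j k => ∑ l, Aε (((n:ℝ)+1)⁻¹) l i *
        Bε (((n:ℝ)+1)⁻¹) l j * Cε (((n:ℝ)+1)⁻¹) l k from rfl, ttm_decomp]
    exact Nat.sInf_le ⟨_, _, _, hdec⟩
end

section
/- No rank-3 tensor in ℝ^{2×2×2} has a best rank-2 approximation: for every 2×2×2 real tensor A with rank(A) = 3, there exists no tensor B with rank(B) ≤ 2 such that ‖A − B‖ ≤ ‖A − C‖ for all tensors C with rank(C) ≤ 2, where ‖·‖ is the Euclidean (Frobenius) norm on tensor entries. -/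
/-- The Euclidean (Frobenius) norm of a `2 × 2 × 2` tensor. -/
noncomputable def tnorm (T : Tensor222) : ℝ :=
  Real.sqrt (∑ i, ∑ j, ∑ k, (T i j k) ^ 2)

namespace NBR

noncomputable def vec (T : Tensor222) : EuclideanSpace ℝ (Fin 2 × Fin 2 × Fin 2) :=
  WithLp.toLp 2 (fun p : Fin 2 × Fin 2 × Fin 2 => T p.1 p.2.1 p.2.2)

lemma tnorm_eq_norm (T : Tensor222) : tnorm T = ‖vec T‖ := by
  rw [EuclideanSpace.norm_eq, tnorm]
  congr 1
  rw [Fintype.sum_prod_type]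
  simp [Fintype.sum_prod_type, vec, Real.norm_eq_abs, sq_abs]

lemma tnorm_triangle (S T : Tensor222) : tnorm (S + T) ≤ tnorm S + tnorm T := by
  rw [tnorm_eq_norm, tnorm_eq_norm, tnorm_eq_norm]
  have hv : vec (S + T) = vec S + vec T := by ext p; simp [vec]
  rw [hv]
  exact norm_add_le (vec S) (vec T)

lemma tnorm_smul (t : ℝ) (S : Tensor222) : tnorm (t • S) = |t| * tnorm S := by
  rw [tnorm_eq_norm, tnorm_eq_norm]
  have : vec (t • S) = t • vec S := by ext p; simp [vec]
  rw [this, norm_smul, Real.norm_eq_abs]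

lemma tnorm_nonneg (S : Tensor222) : 0 ≤ tnorm S := Real.sqrt_nonneg _

lemma tnorm_eq_zero {S : Tensor222} (h : tnorm S = 0) : S = 0 := by
  rw [tnorm_eq_norm] at h
  have h2 : vec S = 0 := norm_eq_zero.mp h
  funext i j k
  simpa [vec] using congrArg (fun v => v (i, j, k)) h2

lemma tnorm_eq_sqrt (T : Tensor222) : tnorm T = Real.sqrt
    (T 0 0 0^2 + T 0 0 1^2 + T 0 1 0^2 + T 0 1 1^2 +
     T 1 0 0^2 + T 1 0 1^2 + T 1 1 0^2 + T 1 1 1^2) := by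
  rw [tnorm]
  congr 1
  simp [Fin.sum_univ_two]
  ring

lemma rank_le_of_decomp (T : Tensor222) (r : ℕ) (a b c : Fin r → Fin 2 → ℝ)
    (h : T = fun i j k => ∑ l, a l i * b l j * c l k) : tensorRank T ≤ r :=
  Nat.sInf_le ⟨a, b, c, h⟩

lemma decomp_nonempty (T : Tensor222) :
    {r : ℕ | ∃ a b c : Fin r → Fin 2 → ℝ,
      T = fun i j k => ∑ l, a l i * b l j * c l k}.Nonempty := by
  refine ⟨4, fun l i => T i (![0,0,1,1] l) (![0,1,0,1] l),
    fun l j => if j = ![0,0,1,1] l then 1 else 0,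
    fun l k => if k = ![0,1,0,1] l then 1 else 0, ?_⟩
  funext i j k
  rw [Fin.sum_univ_four]
  fin_cases j <;> fin_cases k <;> simp

lemma mem_rank (T : Tensor222) : ∃ a b c : Fin (tensorRank T) → Fin 2 → ℝ,
    T = fun i j k => ∑ l, a l i * b l j * c l k :=
  Nat.sInf_mem (decomp_nonempty T)

lemma pad2 (T : Tensor222) (r : ℕ) (hr : r ≤ 2) (a b c : Fin r → Fin 2 → ℝ)
    (h : T = fun i j k => ∑ l, a l i * b l j * c l k) :
    ∃ a' b' c' : Fin 2 → Fin 2 → ℝ,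
      T = fun i j k => ∑ l, a' l i * b' l j * c' l k := by
  interval_cases r
  · exact ⟨0, 0, 0, by rw [h]; funext i j k; simp⟩
  · exact ⟨![a 0, 0], ![b 0, 0], ![c 0, 0], by
      rw [h]; funext i j k; simp [Fin.sum_univ_two]⟩
  · exact ⟨a, b, c, h⟩

lemma exists_decomp2 (B : Tensor222) (h : tensorRank B ≤ 2) :
    ∃ a b c : Fin 2 → Fin 2 → ℝ,
      B = fun i j k => ∑ l, a l i * b l j * c l k := by
  obtain ⟨a, b, c, hd⟩ := mem_rank B
  exact pad2 B _ h a b c hd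


-- mode-1 linear transforms don't increase rank
lemma mode1_rank_le (L : Fin 2 → Fin 2 → ℝ) (T : Tensor222) :
    tensorRank (fun i j k => L i 0 * T 0 j k + L i 1 * T 1 j k) ≤ tensorRank T := by
  obtain ⟨a, b, c, h⟩ := mem_rank T
  apply rank_le_of_decomp _ _ (fun l i => L i 0 * a l 0 + L i 1 * a l 1) b c
  have hT : ∀ i j k, T i j k = ∑ l, a l i * b l j * c l k :=
    fun i j k => congrFun (congrFun (congrFun h i) j) k
  funext i j k
  rw [hT 0 j k, hT 1 j k]
  rw [Finset.mul_sum, Finset.mul_sum, ← Finset.sum_add_distrib]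
  exact Finset.sum_congr rfl (fun l _ => by ring)

lemma rank_swap12_le (T : Tensor222) :
    tensorRank (fun i j k => T j i k) ≤ tensorRank T := by
  obtain ⟨a, b, c, h⟩ := mem_rank T
  apply rank_le_of_decomp _ _ b a c
  funext i j k
  rw [congrFun (congrFun (congrFun h j) i) k]
  exact Finset.sum_congr rfl (fun l _ => by ring)

lemma rank_swap13_le (T : Tensor222) :
    tensorRank (fun i j k => T k j i) ≤ tensorRank T := by
  obtain ⟨a, b, c, h⟩ := mem_rank T
  apply rank_le_of_decomp _ _ c b a
  funext i j k
  rw [congrFun (congrFun (congrFun h k) j) i]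
  exact Finset.sum_congr rfl (fun l _ => by ring)

lemma tnorm_swap12 (T : Tensor222) : tnorm (fun i j k => T j i k) = tnorm T := by
  rw [tnorm, tnorm]
  congr 1
  simp [Fin.sum_univ_two]
  ring

lemma tnorm_swap13 (T : Tensor222) : tnorm (fun i j k => T k j i) = tnorm T := by
  rw [tnorm, tnorm]
  congr 1
  simp [Fin.sum_univ_two]
  ring

-- rank of a slab tensor x ⊗ M
lemma slab_rank_le (x : Fin 2 → ℝ) (M : Fin 2 → Fin 2 → ℝ) :
    tensorRank (fun i j k => x i * M j k) ≤ 2 := by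
  apply rank_le_of_decomp _ 2 (fun _ i => x i) (fun l j => M j l)
    (fun l k => if k = l then 1 else 0)
  funext i j k
  rw [Fin.sum_univ_two]
  fin_cases k <;> simp

noncomputable def Del (T : Tensor222) : ℝ :=
  (T 0 0 0 * T 1 1 1 + T 1 0 0 * T 0 1 1 - T 0 0 1 * T 1 1 0 - T 1 0 1 * T 0 1 0)^2
  - 4 * (T 0 0 0 * T 0 1 1 - T 0 0 1 * T 0 1 0) * (T 1 0 0 * T 1 1 1 - T 1 0 1 * T 1 1 0)

lemma del_rank2 (a b c : Fin 2 → Fin 2 → ℝ) :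
    Del (fun i j k => ∑ l, a l i * b l j * c l k) =
      ((a 0 0 * a 1 1 - a 0 1 * a 1 0) * (b 0 0 * b 1 1 - b 0 1 * b 1 0) *
        (c 0 0 * c 1 1 - c 0 1 * c 1 0))^2 := by
  simp only [Del, Fin.sum_univ_two]
  ring

lemma rank1_of_det0 (M : Fin 2 → Fin 2 → ℝ) (h : M 0 0 * M 1 1 - M 0 1 * M 1 0 = 0) :
    ∃ w χ : Fin 2 → ℝ, ∀ j k, M j k = w j * χ k := by
  by_cases h00 : M 0 0 ≠ 0
  · refine ⟨![M 0 0, M 1 0], ![1, M 0 1 / M 0 0], fun j k => ?_⟩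
    fin_cases j <;> fin_cases k <;> simp <;> field_simp <;> linear_combination h
  · by_cases h01 : M 0 1 ≠ 0
    · refine ⟨![M 0 1, M 1 1], ![M 0 0 / M 0 1, 1], fun j k => ?_⟩
      fin_cases j <;> fin_cases k <;> simp <;> field_simp <;> linear_combination -h
    · push_neg at h00 h01
      refine ⟨![0, 1], ![M 1 0, M 1 1], fun j k => ?_⟩
      fin_cases j <;> fin_cases k <;> simp [h00, h01]

lemma collin (v w : Fin 2 → ℝ) (h : v 0 * w 1 - v 1 * w 0 = 0) :
    ∃ x : Fin 2 → ℝ, ∃ α β : ℝ, (∀ i, v i = α * x i) ∧ (∀ i, w i = β * x i) := by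
  by_cases h0 : v 0 ≠ 0
  · refine ⟨v, 1, w 0 / v 0, fun i => by ring, fun i => ?_⟩
    fin_cases i
    · simp only [Fin.zero_eta]; field_simp
    · simp only [Fin.mk_one]; field_simp; linear_combination h
  · push_neg at h0
    by_cases h1 : v 1 ≠ 0
    · refine ⟨v, 1, w 1 / v 1, fun i => by ring, fun i => ?_⟩
      fin_cases i
      · field_simp
        have : w 0 = 0 := by
          have := h; rw [h0] at this; simp at this
          rcases this with h' | h'
          · exact absurd h' h1
          · exact h'
        simp [h0, this]
      · simp only [Fin.mk_one]; field_simp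
    · push_neg at h1
      exact ⟨w, 0, 1, fun i => by fin_cases i <;> simp [h0, h1], fun i => by ring⟩


/-- explicit real eigen-decomposition of a 2×2 matrix with positive discriminant,
in the form of two rank-one "projectors" summing to the identity. -/
lemma eigen (G : Fin 2 → Fin 2 → ℝ)
    (h : 0 < (G 0 0 - G 1 1)^2 + 4 * G 0 1 * G 1 0) :
    ∃ w χ w' χ' : Fin 2 → ℝ, ∃ d₁ d₂ : ℝ,
      (∀ j k, w j * χ k + w' j * χ' k = if j = k then (1:ℝ) else 0) ∧
      (∀ j k, d₁ * (w j * χ k) + d₂ * (w' j * χ' k) = G j k) := by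
  set sq := Real.sqrt ((G 0 0 - G 1 1)^2 + 4 * G 0 1 * G 1 0) with hsqdef
  have hsq : sq^2 = (G 0 0 - G 1 1)^2 + 4 * G 0 1 * G 1 0 := Real.sq_sqrt h.le
  have hsqpos : 0 < sq := Real.sqrt_pos.mpr h
  have hsqne : sq ≠ 0 := ne_of_gt hsqpos
  obtain ⟨w, χ, hH⟩ : ∃ w χ : Fin 2 → ℝ, ∀ j k,
      (G j k - (if j = k then (G 0 0 + G 1 1 - sq)/2 else 0))/sq = w j * χ k := by
    apply rank1_of_det0
    simp only [if_pos rfl]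
    norm_num
    field_simp
    linear_combination hsq
  obtain ⟨w', χ', hK⟩ : ∃ w' χ' : Fin 2 → ℝ, ∀ j k,
      ((if j = k then (1:ℝ) else 0) -
        (G j k - (if j = k then (G 0 0 + G 1 1 - sq)/2 else 0))/sq) = w' j * χ' k := by
    apply rank1_of_det0
    simp only [if_pos rfl]
    norm_num
    field_simp
    linear_combination hsq
  refine ⟨w, χ, w', χ', (G 0 0 + G 1 1 + sq)/2, (G 0 0 + G 1 1 - sq)/2, ?_, ?_⟩
  · intro j k
    rw [← hH, ← hK]
    ring
  · intro j k
    rw [← hH, ← hK]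
    by_cases hjk : j = k <;> simp [hjk] <;> field_simp <;> ring

/-- A tensor whose first slice is X and second slice X·G with disc(G)>0 has rank ≤ 2. -/
lemma rank_slices (X G : Fin 2 → Fin 2 → ℝ)
    (h : 0 < (G 0 0 - G 1 1)^2 + 4 * G 0 1 * G 1 0) :
    tensorRank (fun i j k =>
      if i = 0 then X j k else (X j 0 * G 0 k + X j 1 * G 1 k)) ≤ 2 := by
  obtain ⟨w, χ, w', χ', d₁, d₂, hid, hG⟩ := eigen G h
  apply rank_le_of_decomp _ 2
    (fun l i => if i = 0 then 1 else if l = 0 then d₁ else d₂)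
    (fun l j => if l = 0 then X j 0 * w 0 + X j 1 * w 1 else X j 0 * w' 0 + X j 1 * w' 1)
    (fun l k => if l = 0 then χ k else χ' k)
  funext i j k
  rw [Fin.sum_univ_two]
  have h0k := hid 0 k; have h1k := hid 1 k
  have g0k := hG 0 k; have g1k := hG 1 k
  fin_cases i
  · simp only [if_pos rfl]
    norm_num
    fin_cases k <;> norm_num at h0k h1k ⊢ <;>
      linear_combination -X j 0 * h0k - X j 1 * h1k
  · norm_num
    linear_combination -X j 0 * g0k - X j 1 * g1k


/-- pencil shift -/
noncomputable def shf (lam : ℝ) (T : Tensor222) : Tensor222 :=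
  fun i j k => if i = 0 then T 0 j k + lam * T 1 j k else T 1 j k

lemma shf_eq_mode1 (lam : ℝ) (T : Tensor222) :
    shf lam T = fun i j k => (![![1, lam], ![0, 1]] : Fin 2 → Fin 2 → ℝ) i 0 * T 0 j k +
      ![![1, lam], ![0, 1]] i 1 * T 1 j k := by
  funext i j k
  fin_cases i <;> simp [shf]

lemma shf_rank_le (lam : ℝ) (T : Tensor222) : tensorRank (shf lam T) ≤ tensorRank T := by
  rw [shf_eq_mode1]
  exact mode1_rank_le _ T

lemma shf_shf (lam : ℝ) (T : Tensor222) : shf (-lam) (shf lam T) = T := by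
  funext i j k
  fin_cases i <;> simp [shf] <;> ring

lemma rank_le_shf (lam : ℝ) (T : Tensor222) : tensorRank T ≤ tensorRank (shf lam T) := by
  conv_lhs => rw [← shf_shf lam T]
  exact shf_rank_le _ _

lemma shf_del (lam : ℝ) (T : Tensor222) : Del (shf lam T) = Del T := by
  simp only [Del, shf]
  norm_num
  ring

lemma shf_det (lam : ℝ) (T : Tensor222) :
    (shf lam T) 0 0 0 * (shf lam T) 0 1 1 - (shf lam T) 0 0 1 * (shf lam T) 0 1 0 =
    (T 0 0 0 * T 0 1 1 - T 0 0 1 * T 0 1 0)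
    + lam * (T 0 0 0 * T 1 1 1 + T 1 0 0 * T 0 1 1 - T 0 0 1 * T 1 1 0 - T 1 0 1 * T 0 1 0)
    + lam^2 * (T 1 0 0 * T 1 1 1 - T 1 0 1 * T 1 1 0) := by
  simp only [shf]
  norm_num
  ring

lemma core_P (T : Tensor222) (hd : T 0 0 0 * T 0 1 1 - T 0 0 1 * T 0 1 0 ≠ 0)
    (hDel : 0 < Del T) : tensorRank T ≤ 2 := by
  set d := T 0 0 0 * T 0 1 1 - T 0 0 1 * T 0 1 0 with hddef
  set G : Fin 2 → Fin 2 → ℝ := fun j k =>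
    (if j = 0 then T 0 1 1 * T 1 0 k - T 0 0 1 * T 1 1 k
     else T 0 0 0 * T 1 1 k - T 0 1 0 * T 1 0 k) / d with hGdef
  have hXG : ∀ j k, T 0 j 0 * G 0 k + T 0 j 1 * G 1 k = T 1 j k := by
    intro j k
    rw [hGdef]
    fin_cases j <;> norm_num <;> field_simp <;> ring
  have hkey : ((G 0 0 - G 1 1)^2 + 4 * G 0 1 * G 1 0) * d^2 = Del T := by
    rw [hGdef]
    norm_num
    field_simp
    simp only [Del]
    ring
  have hdisc : 0 < (G 0 0 - G 1 1)^2 + 4 * G 0 1 * G 1 0 := by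
    have hd2 : 0 < d^2 := by positivity
    nlinarith [hkey]
  have hT : T = (fun i j k =>
      if i = 0 then T 0 j k else (T 0 j 0 * G 0 k + T 0 j 1 * G 1 k)) := by
    funext i j k
    fin_cases i
    · simp
    · simp [hXG j k]
  rw [hT]
  exact rank_slices (T 0) G hdisc

lemma rank_le_two_of_del_pos (T : Tensor222) (h : 0 < Del T) : tensorRank T ≤ 2 := by
  by_cases h0 : T 0 0 0 * T 0 1 1 - T 0 0 1 * T 0 1 0 ≠ 0
  · exact core_P T h0 h
  · by_cases h1 : (shf 1 T) 0 0 0 * (shf 1 T) 0 1 1 - (shf 1 T) 0 0 1 * (shf 1 T) 0 1 0 ≠ 0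
    · exact le_trans (rank_le_shf 1 T) (core_P _ h1 (by rw [shf_del]; exact h))
    · by_cases h2 : (shf (-1) T) 0 0 0 * (shf (-1) T) 0 1 1 -
          (shf (-1) T) 0 0 1 * (shf (-1) T) 0 1 0 ≠ 0
      · exact le_trans (rank_le_shf (-1) T) (core_P _ h2 (by rw [shf_del]; exact h))
      · exfalso
        push_neg at h0 h1 h2
        rw [shf_det] at h1 h2
        have hb : T 0 0 0 * T 1 1 1 + T 1 0 0 * T 0 1 1 - T 0 0 1 * T 1 1 0
            - T 1 0 1 * T 0 1 0 = 0 := by linarith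
        have hDel0 : Del T = 0 := by
          simp only [Del]
          linear_combination (T 0 0 0 * T 1 1 1 + T 1 0 0 * T 0 1 1 - T 0 0 1 * T 1 1 0
            - T 1 0 1 * T 0 1 0) * hb - 4 * (T 1 0 0 * T 1 1 1 - T 1 0 1 * T 1 1 0) * h0
        linarith


lemma tnorm_shf_le (S : Tensor222) : tnorm (shf (-1) S) ≤ 2 * tnorm S := by
  rw [tnorm_eq_sqrt, tnorm_eq_sqrt]
  rw [show (2:ℝ) = Real.sqrt 4 by
    rw [show (4:ℝ) = 2^2 by norm_num, Real.sqrt_sq (by norm_num)]]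
  rw [← Real.sqrt_mul (by norm_num)]
  apply Real.sqrt_le_sqrt
  simp only [shf]
  norm_num
  nlinarith [sq_nonneg (S 0 0 0 + S 1 0 0), sq_nonneg (S 0 0 1 + S 1 0 1),
    sq_nonneg (S 0 1 0 + S 1 1 0), sq_nonneg (S 0 1 1 + S 1 1 1),
    sq_nonneg (S 1 0 0), sq_nonneg (S 1 0 1), sq_nonneg (S 1 1 0), sq_nonneg (S 1 1 1)]

set_option maxHeartbeats 1000000 in
lemma core_approx (T : Tensor222) (hd : T 0 0 0 * T 0 1 1 - T 0 0 1 * T 0 1 0 ≠ 0)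
    (hDel : Del T = 0) (ε : ℝ) (hε : 0 < ε) :
    ∃ C : Tensor222, tensorRank C ≤ 2 ∧ tnorm (T - C) < ε := by
  set d := T 0 0 0 * T 0 1 1 - T 0 0 1 * T 0 1 0 with hddef
  set G : Fin 2 → Fin 2 → ℝ := fun j k =>
    (if j = 0 then T 0 1 1 * T 1 0 k - T 0 0 1 * T 1 1 k
     else T 0 0 0 * T 1 1 k - T 0 1 0 * T 1 0 k) / d with hGdef
  have hXG : ∀ j k, T 0 j 0 * G 0 k + T 0 j 1 * G 1 k = T 1 j k := by
    intro j k
    rw [hGdef]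
    fin_cases j <;> norm_num <;> field_simp <;> ring
  have hkey : ((G 0 0 - G 1 1)^2 + 4 * G 0 1 * G 1 0) * d^2 = Del T := by
    rw [hGdef]
    norm_num
    field_simp
    simp only [Del]
    ring
  have hdisc0 : (G 0 0 - G 1 1)^2 + 4 * G 0 1 * G 1 0 = 0 := by
    have hd2 : d^2 ≠ 0 := pow_ne_zero _ hd
    rw [hDel] at hkey
    exact (mul_eq_zero.mp hkey).resolve_right hd2
  set E := T 0 0 0^2 + T 0 0 1^2 + T 0 1 0^2 + T 0 1 1^2 with hEdef
  have hEnn : (0:ℝ) ≤ E := by rw [hEdef]; positivity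
  have hsE : (0:ℝ) ≤ Real.sqrt E := Real.sqrt_nonneg E
  set δ := ε / (2 * (Real.sqrt E + 1)) with hδdef
  have hδ : 0 < δ := by rw [hδdef]; positivity
  set e := if G 1 1 ≤ G 0 0 then δ else -δ with hedef
  have he2 : e^2 = δ^2 := by rw [hedef]; split <;> ring
  have hepos : 0 ≤ e * (G 0 0 - G 1 1) := by
    rw [hedef]; split
    · rename_i hc; nlinarith
    · rename_i hc; push_neg at hc; nlinarith
  set G' : Fin 2 → Fin 2 → ℝ := fun j k =>
    G j k + e * (if j = k then (if j = 0 then 1 else -1) else 0) with hG'def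
  have hdisc' : 0 < (G' 0 0 - G' 1 1)^2 + 4 * G' 0 1 * G' 1 0 := by
    rw [hG'def]
    norm_num
    nlinarith [hdisc0, hepos, he2, hδ]
  set C : Tensor222 := fun i j k =>
    if i = 0 then T 0 j k else (T 0 j 0 * G' 0 k + T 0 j 1 * G' 1 k) with hCdef
  refine ⟨C, rank_slices (T 0) G' hdisc', ?_⟩
  have hz : ∀ j k, (T - C) 0 j k = 0 := by
    intro j k; simp [hCdef, Pi.sub_apply]
  have hy0 : ∀ j : Fin 2, (T - C) 1 j 0 = -(e * T 0 j 0) := by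
    intro j
    simp only [Pi.sub_apply, hCdef, if_neg (by norm_num : ¬(1:Fin 2) = 0)]
    rw [hG'def]
    norm_num
    linear_combination -hXG j 0
  have hy1 : ∀ j : Fin 2, (T - C) 1 j 1 = e * T 0 j 1 := by
    intro j
    simp only [Pi.sub_apply, hCdef, if_neg (by norm_num : ¬(1:Fin 2) = 0)]
    rw [hG'def]
    norm_num
    linear_combination -hXG j 1
  rw [tnorm_eq_sqrt]
  rw [hz 0 0, hz 0 1, hz 1 0, hz 1 1, hy0 0, hy1 0, hy0 1, hy1 1]
  have hid : (0:ℝ)^2 + 0^2 + 0^2 + 0^2 + (-(e * T 0 0 0))^2 + (e * T 0 0 1)^2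
      + (-(e * T 0 1 0))^2 + (e * T 0 1 1)^2 = (δ * Real.sqrt E)^2 := by
    have h1 : (δ * Real.sqrt E)^2 = δ^2 * E := by
      rw [mul_pow, Real.sq_sqrt hEnn]
    rw [h1, ← he2, hEdef]; ring
  rw [hid, Real.sqrt_sq (by positivity)]
  rw [hδdef, div_mul_eq_mul_div, div_lt_iff₀ (by positivity)]
  nlinarith [hε, hsE]

lemma approx_of_del_zero (T : Tensor222) (hDel : Del T = 0) (ε : ℝ) (hε : 0 < ε) :
    ∃ C : Tensor222, tensorRank C ≤ 2 ∧ tnorm (T - C) < ε := by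
  by_cases h0 : T 0 0 0 * T 0 1 1 - T 0 0 1 * T 0 1 0 ≠ 0
  · exact core_approx T h0 hDel ε hε
  · push_neg at h0
    by_cases h1 : T 1 0 0 * T 1 1 1 - T 1 0 1 * T 1 1 0 ≠ 0
    · have hb2 : (T 0 0 0 * T 1 1 1 + T 1 0 0 * T 0 1 1 - T 0 0 1 * T 1 1 0
          - T 1 0 1 * T 0 1 0)^2 = 0 := by
        simp only [Del] at hDel
        linear_combination hDel + 4 * (T 1 0 0 * T 1 1 1 - T 1 0 1 * T 1 1 0) * h0
      have hb : T 0 0 0 * T 1 1 1 + T 1 0 0 * T 0 1 1 - T 0 0 1 * T 1 1 0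
          - T 1 0 1 * T 0 1 0 = 0 := by
        exact pow_eq_zero_iff (by norm_num) |>.mp hb2
      have hdet1 : (shf 1 T) 0 0 0 * (shf 1 T) 0 1 1
          - (shf 1 T) 0 0 1 * (shf 1 T) 0 1 0 ≠ 0 := by
        rw [shf_det, h0, hb]
        simpa using h1
      have hdel1 : Del (shf 1 T) = 0 := by rw [shf_del]; exact hDel
      obtain ⟨C', hC'rank, hC'close⟩ := core_approx (shf 1 T) hdet1 hdel1 (ε/2) (by positivity)
      refine ⟨shf (-1) C', le_trans (shf_rank_le _ _) hC'rank, ?_⟩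
      have hdiff : T - shf (-1) C' = shf (-1) (shf 1 T - C') := by
        funext i j k
        fin_cases i <;> simp [shf, Pi.sub_apply] <;> ring
      rw [hdiff]
      calc tnorm (shf (-1) (shf 1 T - C')) ≤ 2 * tnorm (shf 1 T - C') := tnorm_shf_le _
        _ < 2 * (ε/2) := by linarith
        _ = ε := by ring
    · push_neg at h1
      obtain ⟨p, q, hpq⟩ := rank1_of_det0 (T 0) h0
      obtain ⟨p', q', hpq'⟩ := rank1_of_det0 (T 1) h1
      refine ⟨T, ?_, by rw [sub_self, tnorm_eq_sqrt]; simpa using hε⟩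
      apply rank_le_of_decomp _ 2 (fun l i => if i = l then 1 else 0)
        (fun l j => if l = 0 then p j else p' j) (fun l k => if l = 0 then q k else q' k)
      funext i j k
      rw [Fin.sum_univ_two]
      fin_cases i <;> simp [hpq j k, hpq' j k]


lemma tnorm_le_iff (S T : Tensor222) :
    tnorm S ≤ tnorm T ↔
    S 0 0 0^2 + S 0 0 1^2 + S 0 1 0^2 + S 0 1 1^2 +
    S 1 0 0^2 + S 1 0 1^2 + S 1 1 0^2 + S 1 1 1^2 ≤
    T 0 0 0^2 + T 0 0 1^2 + T 0 1 0^2 + T 0 1 1^2 +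
    T 1 0 0^2 + T 1 0 1^2 + T 1 1 0^2 + T 1 1 1^2 := by
  rw [tnorm_eq_sqrt, tnorm_eq_sqrt]
  exact Real.sqrt_le_sqrt_iff (by positivity)

lemma inner_zero (SW c : ℝ) (hSW : 0 ≤ SW) (h : ∀ t : ℝ, 0 ≤ t^2 * SW - 2*t*c) :
    c = 0 := by
  by_contra hc
  have h2 : (0:ℝ) < SW + 1 := by linarith
  have ht := h (c / (SW + 1))
  have hc2 : 0 < c^2 := by positivity
  have heq : (c/(SW+1))^2 * SW - 2*(c/(SW+1))*c
      = (c^2 * SW - 2*c^2*(SW+1))/(SW+1)^2 := by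
    field_simp
  rw [heq] at ht
  have hnum : 0 ≤ c^2 * SW - 2*c^2*(SW+1) := by
    have := mul_nonneg ht (le_of_lt (pow_pos h2 2))
    rwa [div_mul_cancel₀] at this
    positivity
  nlinarith

set_option maxHeartbeats 3000000 in
lemma deg_case_unit (A B : Tensor222) (hA3 : ¬ tensorRank A ≤ 2)
    (hmin : ∀ C, tensorRank C ≤ 2 → tnorm (A - B) ≤ tnorm (A - C))
    (x : Fin 2 → ℝ) (hx : x 0^2 + x 1^2 = 1)
    (M : Fin 2 → Fin 2 → ℝ) (hB : ∀ i j k, B i j k = x i * M j k) : False := by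
  obtain ⟨N0, hN0⟩ : ∃ F : Fin 2 → Fin 2 → ℝ,
      F = fun j k => x 0 * (A 0 j k - B 0 j k) + x 1 * (A 1 j k - B 1 j k) := ⟨_, rfl⟩
  obtain ⟨N, hN⟩ : ∃ F : Fin 2 → Fin 2 → ℝ,
      F = fun j k => -(x 1) * (A 0 j k - B 0 j k) + x 0 * (A 1 j k - B 1 j k) := ⟨_, rfl⟩
  have hkey0 : ∀ j k, A 0 j k = x 0 * (M j k + N0 j k) + -(x 1) * N j k := by
    intro j k
    rw [hN0, hN]
    simp only
    rw [hB 0 j k, hB 1 j k]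
    linear_combination (-(A 0 j k) + x 0 * M j k) * hx
  have hkey1 : ∀ j k, A 1 j k = x 1 * (M j k + N0 j k) + x 0 * N j k := by
    intro j k
    rw [hN0, hN]
    simp only
    rw [hB 0 j k, hB 1 j k]
    linear_combination (-(A 1 j k) + x 1 * M j k) * hx
  have hsq1 : ∀ a b : ℝ, (x 0 * a + -(x 1) * b)^2 + (x 1 * a + x 0 * b)^2 = a^2 + b^2 :=
    fun a b => by linear_combination (a^2 + b^2) * hx
  have hsq2 : ∀ b : ℝ, (-(x 1) * b)^2 + (x 0 * b)^2 = b^2 :=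
    fun b => by linear_combination b^2 * hx
  -- entries of A - B
  have habs0 : ∀ j k, (A - B) 0 j k = x 0 * N0 j k + -(x 1) * N j k := by
    intro j k; simp only [Pi.sub_apply]; rw [hB 0 j k, hkey0 j k]; ring
  have habs1 : ∀ j k, (A - B) 1 j k = x 1 * N0 j k + x 0 * N j k := by
    intro j k; simp only [Pi.sub_apply]; rw [hB 1 j k, hkey1 j k]; ring
  -- Step 1: N0 = 0
  obtain ⟨C1, hC1⟩ : ∃ F : Tensor222, F = fun i j k => x i * (M j k + N0 j k) := ⟨_, rfl⟩
  have hac0 : ∀ j k, (A - C1) 0 j k = -(x 1) * N j k := by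
    intro j k; simp only [Pi.sub_apply, hC1]; rw [hkey0 j k]; ring
  have hac1 : ∀ j k, (A - C1) 1 j k = x 0 * N j k := by
    intro j k; simp only [Pi.sub_apply, hC1]; rw [hkey1 j k]; ring
  have h1 := (tnorm_le_iff (A - B) (A - C1)).mp (hmin C1 (by rw [hC1]; exact slab_rank_le x _))
  rw [habs0 0 0, habs0 0 1, habs0 1 0, habs0 1 1,
    habs1 0 0, habs1 0 1, habs1 1 0, habs1 1 1,
    hac0 0 0, hac0 0 1, hac0 1 0, hac0 1 1,
    hac1 0 0, hac1 0 1, hac1 1 0, hac1 1 1] at h1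
  have hsum : N0 0 0^2 + N0 0 1^2 + N0 1 0^2 + N0 1 1^2 ≤ 0 := by
    linarith [h1, hsq1 (N0 0 0) (N 0 0), hsq1 (N0 0 1) (N 0 1),
      hsq1 (N0 1 0) (N 1 0), hsq1 (N0 1 1) (N 1 1),
      hsq2 (N 0 0), hsq2 (N 0 1), hsq2 (N 1 0), hsq2 (N 1 1)]
  have hz00 : N0 0 0 = 0 := by
    have hle : N0 0 0 ^ 2 ≤ 0 := by
      linarith [hsum, sq_nonneg (N0 0 1), sq_nonneg (N0 1 0), sq_nonneg (N0 1 1)]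
    have heq := le_antisymm hle (sq_nonneg (N0 0 0))
    exact pow_eq_zero_iff (n := 2) (by norm_num) |>.mp heq
  have hz01 : N0 0 1 = 0 := by
    have hle : N0 0 1 ^ 2 ≤ 0 := by
      linarith [hsum, sq_nonneg (N0 0 0), sq_nonneg (N0 1 0), sq_nonneg (N0 1 1)]
    have heq := le_antisymm hle (sq_nonneg (N0 0 1))
    exact pow_eq_zero_iff (n := 2) (by norm_num) |>.mp heq
  have hz10 : N0 1 0 = 0 := by
    have hle : N0 1 0 ^ 2 ≤ 0 := by
      linarith [hsum, sq_nonneg (N0 0 0), sq_nonneg (N0 0 1), sq_nonneg (N0 1 1)]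
    have heq := le_antisymm hle (sq_nonneg (N0 1 0))
    exact pow_eq_zero_iff (n := 2) (by norm_num) |>.mp heq
  have hz11 : N0 1 1 = 0 := by
    have hle : N0 1 1 ^ 2 ≤ 0 := by
      linarith [hsum, sq_nonneg (N0 0 0), sq_nonneg (N0 0 1), sq_nonneg (N0 1 0)]
    have heq := le_antisymm hle (sq_nonneg (N0 1 1))
    exact pow_eq_zero_iff (n := 2) (by norm_num) |>.mp heq
  have hN0z : ∀ j k, N0 j k = 0 := by
    intro j k; fin_cases j <;> fin_cases k <;> assumption
  have hA20 : ∀ j k, A 0 j k = x 0 * M j k + -(x 1) * N j k := by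
    intro j k; rw [hkey0 j k, hN0z j k]; ring
  have hA21 : ∀ j k, A 1 j k = x 1 * M j k + x 0 * N j k := by
    intro j k; rw [hkey1 j k, hN0z j k]; ring
  -- N is nonzero somewhere
  have hNne : ∃ j k, N j k ≠ 0 := by
    by_contra hall
    push_neg at hall
    apply hA3
    have hAx : A = fun i j k => x i * M j k := by
      funext i j k
      have h0 := hA20 j k
      have h1 := hA21 j k
      rw [hall j k] at h0 h1
      fin_cases i
      · simpa using h0
      · simpa using h1
    rw [hAx]
    exact slab_rank_le x M
  obtain ⟨j0, k0, hj0⟩ := hNne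
  -- master step: any direction W that keeps rank ≤ 2 must be orthogonal to N
  have hstep : ∀ W : Fin 2 → Fin 2 → ℝ,
      (∀ t : ℝ, tensorRank (fun i j k => x i * M j k
          + (if i = 0 then -(x 1) else x 0) * (t * W j k)) ≤ 2) →
      N 0 0 * W 0 0 + N 0 1 * W 0 1 + N 1 0 * W 1 0 + N 1 1 * W 1 1 = 0 := by
    intro W hrk
    apply inner_zero (W 0 0^2 + W 0 1^2 + W 1 0^2 + W 1 1^2) _ (by positivity)
    intro t
    obtain ⟨Ct, hCt⟩ : ∃ F : Tensor222, F = fun i j k => x i * M j k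
      + (if i = 0 then -(x 1) else x 0) * (t * W j k) := ⟨_, rfl⟩
    have hacW0 : ∀ j k, (A - Ct) 0 j k = -(x 1) * (N j k - t * W j k) := by
      intro j k
      rw [hCt]
      simp only [Pi.sub_apply]
      norm_num
      rw [hA20 j k]
      ring
    have hacW1 : ∀ j k, (A - Ct) 1 j k = x 0 * (N j k - t * W j k) := by
      intro j k
      rw [hCt]
      simp only [Pi.sub_apply]
      norm_num
      rw [hA21 j k]
      ring
    have h2 := (tnorm_le_iff (A - B) (A - Ct)).mp (hmin Ct (by rw [hCt]; exact hrk t))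
    rw [habs0 0 0, habs0 0 1, habs0 1 0, habs0 1 1,
      habs1 0 0, habs1 0 1, habs1 1 0, habs1 1 1,
      hacW0 0 0, hacW0 0 1, hacW0 1 0, hacW0 1 1,
      hacW1 0 0, hacW1 0 1, hacW1 1 0, hacW1 1 1,
      hN0z 0 0, hN0z 0 1, hN0z 1 0, hN0z 1 1] at h2
    have hring : (N 0 0 - t*W 0 0)^2 + (N 0 1 - t*W 0 1)^2 + (N 1 0 - t*W 1 0)^2
        + (N 1 1 - t*W 1 1)^2 = N 0 0^2 + N 0 1^2 + N 1 0^2 + N 1 1^2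
        - 2*t*(N 0 0 * W 0 0 + N 0 1 * W 0 1 + N 1 0 * W 1 0 + N 1 1 * W 1 1)
        + t^2*(W 0 0^2 + W 0 1^2 + W 1 0^2 + W 1 1^2) := by ring
    linarith [h2, hsq1 (0:ℝ) (N 0 0), hsq1 (0:ℝ) (N 0 1), hsq1 (0:ℝ) (N 1 0),
      hsq1 (0:ℝ) (N 1 1),
      hsq2 (N 0 0 - t*W 0 0), hsq2 (N 0 1 - t*W 0 1), hsq2 (N 1 0 - t*W 1 0),
      hsq2 (N 1 1 - t*W 1 1), hring]
  by_cases hdM : M 0 0 * M 1 1 - M 0 1 * M 1 0 = 0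
  · -- M has rank ≤ 1 : every rank-one direction keeps rank ≤ 2
    obtain ⟨p, q, hpq⟩ := rank1_of_det0 M hdM
    have hz : ∀ (u v : Fin 2 → ℝ),
        N 0 0 * (u 0 * v 0) + N 0 1 * (u 0 * v 1)
        + N 1 0 * (u 1 * v 0) + N 1 1 * (u 1 * v 1) = 0 := by
      intro u v
      refine hstep (fun j k => u j * v k) (fun t => ?_)
      apply rank_le_of_decomp _ 2
        (fun l i => if l = 0 then x i else (if i = 0 then -(x 1) else x 0))
        (fun l j => if l = 0 then p j else t * u j)
        (fun l k => if l = 0 then q k else v k)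
      funext i j k
      rw [Fin.sum_univ_two]
      norm_num
      rw [hpq j k]
      ring
    have h00 := hz ![1,0] ![1,0]
    have h01 := hz ![1,0] ![0,1]
    have h10 := hz ![0,1] ![1,0]
    have h11 := hz ![0,1] ![0,1]
    norm_num at h00 h01 h10 h11
    apply hj0
    fin_cases j0 <;> fin_cases k0 <;> assumption
  · -- det M ≠ 0
    have hconf : ∀ (w χ w' χ' : Fin 2 → ℝ),
        (∀ j k, w j * χ k + w' j * χ' k = if j = k then (1:ℝ) else 0) →
        ∀ d₁ d₂ : ℝ,
        N 0 0 * (d₁ * ((M 0 0 * w 0 + M 0 1 * w 1) * χ 0) + d₂ * ((M 0 0 * w' 0 + M 0 1 * w' 1) * χ' 0))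
      + N 0 1 * (d₁ * ((M 0 0 * w 0 + M 0 1 * w 1) * χ 1) + d₂ * ((M 0 0 * w' 0 + M 0 1 * w' 1) * χ' 1))
      + N 1 0 * (d₁ * ((M 1 0 * w 0 + M 1 1 * w 1) * χ 0) + d₂ * ((M 1 0 * w' 0 + M 1 1 * w' 1) * χ' 0))
      + N 1 1 * (d₁ * ((M 1 0 * w 0 + M 1 1 * w 1) * χ 1) + d₂ * ((M 1 0 * w' 0 + M 1 1 * w' 1) * χ' 1)) = 0 := by
      intro w χ w' χ' hid d₁ d₂
      refine hstep (fun j k => d₁ * ((M j 0 * w 0 + M j 1 * w 1) * χ k)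
          + d₂ * ((M j 0 * w' 0 + M j 1 * w' 1) * χ' k)) (fun t => ?_)
      apply rank_le_of_decomp _ 2
        (fun l i => x i + t * (if l = 0 then d₁ else d₂) * (if i = 0 then -(x 1) else x 0))
        (fun l j => if l = 0 then M j 0 * w 0 + M j 1 * w 1 else M j 0 * w' 0 + M j 1 * w' 1)
        (fun l k => if l = 0 then χ k else χ' k)
      funext i j k
      rw [Fin.sum_univ_two]
      have h0k := hid 0 k
      have h1k := hid 1 k
      fin_cases i <;> fin_cases k <;> norm_num at h0k h1k ⊢ <;>
        first
          | linear_combination (x 0 * M j 0) * h0k + (x 0 * M j 1) * h1k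
          | linear_combination -((x 0 * M j 0) * h0k + (x 0 * M j 1) * h1k)
          | linear_combination (x 1 * M j 0) * h0k + (x 1 * M j 1) * h1k
          | linear_combination -((x 1 * M j 0) * h0k + (x 1 * M j 1) * h1k)
    have r1 := hconf ![1,0] ![1,0] ![0,1] ![0,1]
      (by intro j k; fin_cases j <;> fin_cases k <;> norm_num) 1 0
    have r2 := hconf ![1,0] ![1,0] ![0,1] ![0,1]
      (by intro j k; fin_cases j <;> fin_cases k <;> norm_num) 0 1
    have r3 := hconf ![1,0] ![1,-1] ![1,1] ![0,1]
      (by intro j k; fin_cases j <;> fin_cases k <;> norm_num) 1 0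
    have r4 := hconf ![0,1] ![-1,1] ![1,1] ![1,0]
      (by intro j k; fin_cases j <;> fin_cases k <;> norm_num) 1 0
    norm_num at r1 r2 r3 r4
    have hN00 : N 0 0 = 0 := by
      have h : (M 0 0 * M 1 1 - M 0 1 * M 1 0) * N 0 0 = 0 := by
        linear_combination M 1 1 * r1 - M 1 0 * r2 + M 1 0 * r4
      exact (mul_eq_zero.mp h).resolve_left hdM
    have hN10 : N 1 0 = 0 := by
      have h : (M 0 0 * M 1 1 - M 0 1 * M 1 0) * N 1 0 = 0 := by
        linear_combination M 0 0 * r2 - M 0 0 * r4 - M 0 1 * r1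
      exact (mul_eq_zero.mp h).resolve_left hdM
    have hN01 : N 0 1 = 0 := by
      have h : (M 0 0 * M 1 1 - M 0 1 * M 1 0) * N 0 1 = 0 := by
        linear_combination M 1 1 * r1 - M 1 1 * r3 - M 1 0 * r2
      exact (mul_eq_zero.mp h).resolve_left hdM
    have hN11 : N 1 1 = 0 := by
      have h : (M 0 0 * M 1 1 - M 0 1 * M 1 0) * N 1 1 = 0 := by
        linear_combination M 0 0 * r2 - M 0 1 * r1 + M 0 1 * r3
      exact (mul_eq_zero.mp h).resolve_left hdM
    apply hj0
    fin_cases j0 <;> fin_cases k0 <;> assumption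


lemma collinAux (a : Fin 2 → Fin 2 → ℝ) (h : a 0 0 * a 1 1 - a 0 1 * a 1 0 = 0) :
    ∃ x : Fin 2 → ℝ, ∃ α β : ℝ, (∀ i, a 0 i = α * x i) ∧ (∀ i, a 1 i = β * x i) := by
  obtain ⟨x, α, β, h1, h2⟩ := collin (fun i => a 0 i) (fun i => a 1 i) h
  exact ⟨x, α, β, h1, h2⟩

lemma deg_case (A B : Tensor222) (hA3 : ¬ tensorRank A ≤ 2)
    (hmin : ∀ C, tensorRank C ≤ 2 → tnorm (A - B) ≤ tnorm (A - C))
    (x : Fin 2 → ℝ) (M : Fin 2 → Fin 2 → ℝ)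
    (hB : ∀ i j k, B i j k = x i * M j k) : False := by
  by_cases hx0 : x 0 = 0 ∧ x 1 = 0
  · exact deg_case_unit A B hA3 hmin ![1, 0] (by norm_num) (fun _ _ => 0)
      (fun i j k => by
        rw [hB i j k]
        fin_cases i <;> simp [hx0.1, hx0.2])
  · have hpos : 0 < x 0^2 + x 1^2 := by
      rcases not_and_or.mp hx0 with h | h <;> positivity
    have hr2 : Real.sqrt (x 0^2 + x 1^2) ^ 2 = x 0^2 + x 1^2 := Real.sq_sqrt hpos.le
    have hrpos : 0 < Real.sqrt (x 0^2 + x 1^2) := Real.sqrt_pos.mpr hpos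
    exact deg_case_unit A B hA3 hmin (fun i => x i / Real.sqrt (x 0^2 + x 1^2))
      (by field_simp; linear_combination -hr2)
      (fun j k => Real.sqrt (x 0^2 + x 1^2) * M j k)
      (fun i j k => by rw [hB i j k]; field_simp; try ring)

lemma deg_case2 (A B : Tensor222) (hA3 : ¬ tensorRank A ≤ 2)
    (hmin : ∀ C, tensorRank C ≤ 2 → tnorm (A - B) ≤ tnorm (A - C))
    (y : Fin 2 → ℝ) (M : Fin 2 → Fin 2 → ℝ)
    (hB : ∀ i j k, B i j k = y j * M i k) : False := by
  apply deg_case (fun i j k => A j i k) (fun i j k => B j i k) ?_ ?_ y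
    (fun j k => M j k) (fun i j k => hB j i k)
  · intro h'
    exact hA3 (le_trans (rank_swap12_le (fun i j k => A j i k)) h')
  · intro C' hC'
    have e1 : (fun i j k => A j i k) - (fun i j k => B j i k)
        = (fun i j k => (A - B) j i k) := by
      funext i j k; simp [Pi.sub_apply]
    have hC : tensorRank (fun i j k => C' j i k) ≤ 2 :=
      le_trans (rank_swap12_le C') hC'
    have e2 : (fun i j k => A j i k) - C'
        = (fun i j k => (A - (fun i' j' k' => C' j' i' k')) j i k) := by
      funext i j k; simp [Pi.sub_apply]
    rw [e1, e2, tnorm_swap12 (A - B), tnorm_swap12 (A - (fun i' j' k' => C' j' i' k'))]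
    exact hmin _ hC

lemma deg_case3 (A B : Tensor222) (hA3 : ¬ tensorRank A ≤ 2)
    (hmin : ∀ C, tensorRank C ≤ 2 → tnorm (A - B) ≤ tnorm (A - C))
    (z : Fin 2 → ℝ) (M : Fin 2 → Fin 2 → ℝ)
    (hB : ∀ i j k, B i j k = z k * M i j) : False := by
  apply deg_case (fun i j k => A k j i) (fun i j k => B k j i) ?_ ?_ z
    (fun j k => M k j) (fun i j k => hB k j i)
  · intro h'
    exact hA3 (le_trans (rank_swap13_le (fun i j k => A k j i)) h')
  · intro C' hC'
    have e1 : (fun i j k => A k j i) - (fun i j k => B k j i)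
        = (fun i j k => (A - B) k j i) := by
      funext i j k; simp [Pi.sub_apply]
    have hC : tensorRank (fun i j k => C' k j i) ≤ 2 :=
      le_trans (rank_swap13_le C') hC'
    have e2 : (fun i j k => A k j i) - C'
        = (fun i j k => (A - (fun i' j' k' => C' k' j' i')) k j i) := by
      funext i j k; simp [Pi.sub_apply]
    rw [e1, e2, tnorm_swap13 (A - B), tnorm_swap13 (A - (fun i' j' k' => C' k' j' i'))]
    exact hmin _ hC


end NBR

/-- No rank-3 tensor in `ℝ^{2×2×2}` has a best rank-2 approximation. -/
theorem no_best_rank_two_approximation (A : Tensor222) (hA : tensorRank A = 3) :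
    ¬∃ B : Tensor222, tensorRank B ≤ 2 ∧
      ∀ C : Tensor222, tensorRank C ≤ 2 → tnorm (A - B) ≤ tnorm (A - C) := by
  rintro ⟨B, hB2, hmin⟩
  have hA3 : ¬ tensorRank A ≤ 2 := by omega
  have hABne : A ≠ B := by rintro rfl; exact hA3 hB2
  have hABpos : 0 < tnorm (A - B) := by
    rcases lt_or_eq_of_le (NBR.tnorm_nonneg (A - B)) with h | h
    · exact h
    · exact absurd (sub_eq_zero.mp (NBR.tnorm_eq_zero h.symm)) hABne
  have hDelA : NBR.Del A ≤ 0 := by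
    by_contra h
    push_neg at h
    exact hA3 (NBR.rank_le_two_of_del_pos A h)
  rcases lt_or_eq_of_le hDelA with hAneg | hAzero
  · -- Del A < 0
    have hDelB : 0 ≤ NBR.Del B := by
      obtain ⟨a, b, c, hd⟩ := NBR.exists_decomp2 B hB2
      rw [hd, NBR.del_rank2]
      positivity
    rcases lt_or_eq_of_le hDelB with hBpos | hBzero
    · -- 0 < Del B : intermediate value argument
      set f : ℝ → ℝ := fun t => NBR.Del (A + t • (B - A)) with hf
      have hfc : Continuous f := by
        rw [hf]
        simp only [NBR.Del, Pi.add_apply, Pi.smul_apply, Pi.sub_apply, smul_eq_mul]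
        fun_prop
      have hf0 : f 0 = NBR.Del A := by
        rw [hf]; simp
      have hf1 : f 1 = NBR.Del B := by
        rw [hf]
        simp only []
        rw [show A + (1:ℝ) • (B - A) = B by module]
      have hmem : (0:ℝ) ∈ Set.Ioo (f 0) (f 1) := by
        rw [hf0, hf1]; exact ⟨hAneg, hBpos⟩
      obtain ⟨t₀, ht₀, hft₀⟩ :=
        intermediate_value_Ioo (by norm_num : (0:ℝ) ≤ 1) hfc.continuousOn hmem
      have hDelD : NBR.Del (A + t₀ • (B - A)) = 0 := hft₀
      have hAD : A - (A + t₀ • (B - A)) = t₀ • (A - B) := by module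
      have hADn : tnorm (A - (A + t₀ • (B - A))) = t₀ * tnorm (A - B) := by
        rw [hAD, NBR.tnorm_smul, abs_of_pos ht₀.1]
      obtain ⟨C, hCrank, hCclose⟩ := NBR.approx_of_del_zero (A + t₀ • (B - A)) hDelD
        ((1 - t₀) * tnorm (A - B)) (by nlinarith [ht₀.2, hABpos])
      have htri : tnorm (A - C) ≤ tnorm (A - (A + t₀ • (B - A)))
          + tnorm ((A + t₀ • (B - A)) - C) := by
        have h := NBR.tnorm_triangle (A - (A + t₀ • (B - A))) ((A + t₀ • (B - A)) - C)
        rw [show (A - (A + t₀ • (B - A))) + ((A + t₀ • (B - A)) - C) = A - C by module] at h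
        exact h
      have hm := hmin C hCrank
      nlinarith [hCclose, hADn, htri, ht₀.1, ht₀.2, hABpos, hm]
    · -- Del B = 0
      obtain ⟨a, b, c, hd⟩ := NBR.exists_decomp2 B hB2
      have hDB : NBR.Del B = ((a 0 0 * a 1 1 - a 0 1 * a 1 0) * (b 0 0 * b 1 1 - b 0 1 * b 1 0)
          * (c 0 0 * c 1 1 - c 0 1 * c 1 0))^2 := by
        rw [hd]; exact NBR.del_rank2 a b c
      have hsq0 : ((a 0 0 * a 1 1 - a 0 1 * a 1 0) * (b 0 0 * b 1 1 - b 0 1 * b 1 0)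
          * (c 0 0 * c 1 1 - c 0 1 * c 1 0))^2 = 0 := by rw [← hDB]; exact hBzero.symm
      have hprod := pow_eq_zero_iff (n := 2) (by norm_num) |>.mp hsq0
      have hBapp : ∀ i j k, B i j k = ∑ l : Fin 2, a l i * b l j * c l k :=
        fun i j k => congrFun (congrFun (congrFun hd i) j) k
      rcases mul_eq_zero.mp hprod with h' | hdc
      · rcases mul_eq_zero.mp h' with hda | hdb
        · obtain ⟨xx, α, β, hva, hwa⟩ := NBR.collinAux a hda
          apply NBR.deg_case A B hA3 hmin xx
            (fun j k => α * (b 0 j * c 0 k) + β * (b 1 j * c 1 k))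
          intro i j k
          rw [hBapp i j k, Fin.sum_univ_two, hva i, hwa i]
          ring
        · obtain ⟨yy, α, β, hvb, hwb⟩ := NBR.collinAux b hdb
          apply NBR.deg_case2 A B hA3 hmin yy
            (fun i k => α * (a 0 i * c 0 k) + β * (a 1 i * c 1 k))
          intro i j k
          rw [hBapp i j k, Fin.sum_univ_two, hvb j, hwb j]
          ring
      · obtain ⟨zz, α, β, hvc, hwc⟩ := NBR.collinAux c hdc
        apply NBR.deg_case3 A B hA3 hmin zz
          (fun i j => α * (a 0 i * b 0 j) + β * (a 1 i * b 1 j))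
        intro i j k
        rw [hBapp i j k, Fin.sum_univ_two, hvc k, hwc k]
        ring
  · -- Del A = 0
    obtain ⟨C, hCrank, hCclose⟩ := NBR.approx_of_del_zero A hAzero (tnorm (A - B)) hABpos
    have := hmin C hCrank
    linarith
end

section
/- Let A be a real m×n matrix with m ≥ n and rank(A) ≥ r. Then there exists a matrix B with rank(B) ≤ r minimizing ‖A − B‖_F over all matrices of rank at most r, and every such minimizer B has rank exactly r. Here ‖·‖_F is the Frobenius norm. -/
/-- The Frobenius norm of a real matrix. -/
noncomputable def frobNorm {m n : ℕ} (M : Matrix (Fin m) (Fin n) ℝ) : ℝ :=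
  Real.sqrt (∑ i, ∑ j, (M i j) ^ 2)

open Matrix

/-- Selecting columns can only decrease the rank. -/
lemma aux_rank_col_select_le {m n k : ℕ} (A : Matrix (Fin m) (Fin n) ℝ) (f : Fin k → Fin n) :
    (A.submatrix id f).rank ≤ A.rank := by
  have h : A.submatrix id f = A * ((1 : Matrix (Fin n) (Fin n) ℝ).submatrix id f) := by
    ext i j
    simp [Matrix.mul_apply, Matrix.one_apply, Matrix.submatrix]
  rw [h]
  exact Matrix.rank_mul_le_left _ _

/-- If the Gram determinant is nonzero, the matrix has full column rank. -/
lemma aux_rank_of_gram {m k : ℕ} (M : Matrix (Fin m) (Fin k) ℝ) (h : (Mᵀ * M).det ≠ 0) :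
    M.rank = k := by
  have hu : IsUnit (Mᵀ * M) := (Matrix.isUnit_iff_isUnit_det _).2 (isUnit_iff_ne_zero.2 h)
  have h2 := Matrix.rank_of_isUnit _ hu
  rw [← Matrix.rank_transpose_mul_self, h2, Fintype.card_fin]

/-- Full column rank implies nonzero Gram determinant. -/
lemma aux_gram_of_rank {m k : ℕ} (M : Matrix (Fin m) (Fin k) ℝ) (h : M.rank = k) :
    (Mᵀ * M).det ≠ 0 := by
  have h2 : (Mᵀ * M).rank = k := by rw [Matrix.rank_transpose_mul_self]; exact h
  intro hd
  obtain ⟨v, hv, hMv⟩ := (Matrix.exists_mulVec_eq_zero_iff).2 hd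
  have hr : LinearMap.range (Mᵀ * M).mulVecLin = ⊤ := by
    apply Submodule.eq_top_of_finrank_eq
    rw [show Module.finrank ℝ (LinearMap.range (Mᵀ * M).mulVecLin) = k from h2]
    simp [Module.finrank_pi]
  have hinj : Function.Injective (Mᵀ * M).mulVecLin :=
    LinearMap.injective_iff_surjective.2 (LinearMap.range_eq_top.1 hr)
  exact hv (hinj (by rw [Matrix.mulVecLin_apply, hMv, map_zero]))

/-- A matrix of rank at least `k` has `k` columns forming a full-column-rank submatrix. -/
lemma aux_exists_cols {m n k : ℕ} (B : Matrix (Fin m) (Fin n) ℝ) (h : k ≤ B.rank) :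
    ∃ f : Fin k → Fin n, (B.submatrix id f).rank = k := by
  obtain ⟨t, hts, hspan, hli⟩ := exists_linearIndependent ℝ (Set.range Bᵀ)
  have htfin : t.Finite := (Set.finite_range Bᵀ).subset hts
  haveI := htfin.fintype
  have hcard : Module.finrank ℝ (Submodule.span ℝ t) = Fintype.card t := by
    rw [← finrank_span_eq_card hli, Subtype.range_coe]
  have hk : k ≤ Fintype.card t := by
    rw [← hcard, hspan]
    rw [Matrix.rank_eq_finrank_span_cols] at h
    exact h
  obtain ⟨g⟩ : Nonempty (Fin k ↪ t) :=
    Function.Embedding.nonempty_of_card_le (by simpa using hk)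
  have hmem : ∀ i : Fin k, ((g i : Fin m → ℝ)) ∈ Set.range Bᵀ := fun i => hts (g i).2
  choose f hf using hmem
  refine ⟨f, ?_⟩
  have hcols : (B.submatrix id f)ᵀ = fun i => (g i : Fin m → ℝ) := by
    funext i j
    rw [← hf i]
    rfl
  have hli2 : LinearIndependent ℝ fun i : Fin k => (g i : Fin m → ℝ) :=
    hli.comp g g.injective
  rw [Matrix.rank_eq_finrank_span_cols, show (B.submatrix id f).col = fun i => (g i : Fin m → ℝ) from hcols, finrank_span_eq_card hli2, Fintype.card_fin]

/-- The set of matrices of rank at most `r` is closed. -/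
lemma aux_isClosed_rank_le {m n : ℕ} (r : ℕ) :
    IsClosed {B : Matrix (Fin m) (Fin n) ℝ | B.rank ≤ r} := by
  rw [← isOpen_compl_iff, isOpen_iff_forall_mem_open]
  intro B hB
  simp only [Set.mem_compl_iff, Set.mem_setOf_eq, not_le] at hB
  obtain ⟨f, hf⟩ := aux_exists_cols B (Nat.succ_le_of_lt hB)
  have hdet : ((B.submatrix id f)ᵀ * (B.submatrix id f)).det ≠ 0 := aux_gram_of_rank _ hf
  refine ⟨{C | ((C.submatrix id f)ᵀ * (C.submatrix id f)).det ≠ 0}, ?_, ?_, hdet⟩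
  · intro C hC
    simp only [Set.mem_setOf_eq] at hC
    simp only [Set.mem_compl_iff, Set.mem_setOf_eq, not_le]
    have h1 : (C.submatrix id f).rank = r + 1 := aux_rank_of_gram _ hC
    have h2 := aux_rank_col_select_le C f
    omega
  · have hcont : Continuous fun C : Matrix (Fin m) (Fin n) ℝ =>
        ((C.submatrix id f)ᵀ * (C.submatrix id f)).det := by
      apply Continuous.matrix_det
      apply continuous_matrix
      intro i j
      simp only [Matrix.mul_apply, Matrix.transpose_apply, Matrix.submatrix_apply, id]
      exact continuous_finset_sum _ fun l _ =>
        (continuous_id.matrix_elem l (f i)).mul (continuous_id.matrix_elem l (f j))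
    exact isOpen_compl_singleton.preimage hcont

lemma aux_sq_entry_le {m n : ℕ} (M : Matrix (Fin m) (Fin n) ℝ) (i : Fin m) (j : Fin n) :
    (M i j) ^ 2 ≤ ∑ a, ∑ b, (M a b) ^ 2 := by
  calc (M i j)^2 ≤ ∑ b, (M i b)^2 :=
        Finset.single_le_sum (fun b _ => sq_nonneg (M i b)) (Finset.mem_univ j)
  _ ≤ ∑ a, ∑ b, (M a b)^2 :=
        Finset.single_le_sum (fun a _ => Finset.sum_nonneg fun b _ => sq_nonneg (M a b))
          (Finset.mem_univ i)

lemma aux_abs_entry_le {m n : ℕ} (M : Matrix (Fin m) (Fin n) ℝ) (i : Fin m) (j : Fin n) :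
    |M i j| ≤ frobNorm M := by
  calc |M i j| = Real.sqrt ((M i j)^2) := (Real.sqrt_sq_eq_abs _).symm
  _ ≤ frobNorm M := Real.sqrt_le_sqrt (aux_sq_entry_le M i j)

lemma aux_frob_continuous {m n : ℕ} (A : Matrix (Fin m) (Fin n) ℝ) :
    Continuous fun C : Matrix (Fin m) (Fin n) ℝ => frobNorm (A - C) := by
  apply Real.continuous_sqrt.comp
  apply continuous_finset_sum
  intro i _
  apply continuous_finset_sum
  intro j _
  have h1 : Continuous fun C : Matrix (Fin m) (Fin n) ℝ => C i j :=
    continuous_id.matrix_elem i j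
  exact (continuous_const.sub h1).pow 2

lemma aux_rank_add_le {m n : ℕ} (B C : Matrix (Fin m) (Fin n) ℝ) :
    (B + C).rank ≤ B.rank + C.rank := by
  have hr : LinearMap.range (B + C).mulVecLin ≤
      LinearMap.range B.mulVecLin ⊔ LinearMap.range C.mulVecLin := by
    rintro x ⟨v, rfl⟩
    exact Submodule.mem_sup.2 ⟨B.mulVecLin v, ⟨v, rfl⟩, C.mulVecLin v, ⟨v, rfl⟩, by
      simp [Matrix.add_mulVec]⟩
  calc (B + C).rank ≤ Module.finrank ℝ
        ↥(LinearMap.range B.mulVecLin ⊔ LinearMap.range C.mulVecLin) :=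
        Submodule.finrank_mono hr
  _ ≤ B.rank + C.rank := Submodule.finrank_add_le_finrank_add_finrank _ _

lemma aux_rank_std_le {m n : ℕ} (i : Fin m) (j : Fin n) (c : ℝ) :
    (Matrix.single i j c).rank ≤ 1 := by
  have h : Matrix.single i j c =
      (Matrix.of fun a (_ : Fin 1) => if a = i then c else 0) *
      (Matrix.of fun (_ : Fin 1) b => if b = j then (1 : ℝ) else 0) := by
    ext a b
    simp only [Matrix.single, Matrix.of_apply, Matrix.mul_apply, Fin.sum_univ_one]
    split_ifs <;> simp_all
  rw [h]
  exact le_trans (Matrix.rank_mul_le_right _ _) ((Matrix.rank_le_card_height _).trans (Fintype.card_fin 1).le)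

/-- For `A : m × n` with `m ≥ n` and `rank(A) ≥ r`, a best approximation of rank at most
`r` in Frobenius norm exists, and every such minimizer has rank exactly `r`. -/
theorem best_rank_r_matrix_approximation {m n : ℕ} (r : ℕ) (hmn : n ≤ m)
    (A : Matrix (Fin m) (Fin n) ℝ) (hA : r ≤ A.rank) :
    (∃ B : Matrix (Fin m) (Fin n) ℝ, B.rank ≤ r ∧
      ∀ C : Matrix (Fin m) (Fin n) ℝ, C.rank ≤ r → frobNorm (A - B) ≤ frobNorm (A - C)) ∧
    (∀ B : Matrix (Fin m) (Fin n) ℝ,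
      (B.rank ≤ r ∧
        ∀ C : Matrix (Fin m) (Fin n) ℝ, C.rank ≤ r → frobNorm (A - B) ≤ frobNorm (A - C)) →
      B.rank = r) := by
  constructor
  · -- Existence of a minimizer
    set K := {C : Matrix (Fin m) (Fin n) ℝ | C.rank ≤ r ∧ frobNorm (A - C) ≤ frobNorm A}
      with hK
    have h0K : (0 : Matrix (Fin m) (Fin n) ℝ) ∈ K := by
      constructor
      · simp [Matrix.rank_zero]
      · simp
    have hKclosed : IsClosed K :=
      (aux_isClosed_rank_le r).inter (isClosed_le (aux_frob_continuous A) continuous_const)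
    have hKcomp : IsCompact K := by
      set c := 2 * frobNorm A with hc
      have hsub : K ⊆
          Set.univ.pi fun _ : Fin m => Set.univ.pi fun _ : Fin n => Set.Icc (-c) c := by
        rintro C ⟨-, hC2⟩
        refine Set.mem_univ_pi.2 ?_
        intro i
        rw [Set.mem_univ_pi]
        intro j
        rw [Set.mem_Icc, ← abs_le]
        have h1 : |C i j| ≤ |A i j| + |(A - C) i j| := by
          have : C i j = A i j - (A - C) i j := by simp
          rw [this]
          exact (abs_sub _ _).trans (by rfl)
        have h2 := aux_abs_entry_le A i j
        have h3 := aux_abs_entry_le (A - C) i j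
        rw [hc]
        linarith
      exact (isCompact_univ_pi fun _ => isCompact_univ_pi fun _ =>
        isCompact_Icc).of_isClosed_subset hKclosed hsub
    obtain ⟨B, hBK, hBmin⟩ := hKcomp.exists_isMinOn ⟨0, h0K⟩
      ((aux_frob_continuous A).continuousOn)
    refine ⟨B, hBK.1, fun C hC => ?_⟩
    by_cases hc2 : frobNorm (A - C) ≤ frobNorm A
    · exact hBmin ⟨hC, hc2⟩
    · have h1 : frobNorm (A - B) ≤ frobNorm A := by
        have := hBmin h0K
        simpa using this
      linarith
  · -- Every minimizer has rank exactly r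
    rintro B ⟨hBr, hmin⟩
    by_contra hne
    have hlt : B.rank < r := lt_of_le_of_ne hBr hne
    have hAB : A ≠ B := by
      rintro rfl
      omega
    obtain ⟨i, j, hij⟩ : ∃ i j, A i j - B i j ≠ 0 := by
      by_contra h
      push_neg at h
      apply hAB
      ext i j
      have := h i j
      linarith
    set d := A i j - B i j with hd
    set C := B + Matrix.single i j d with hC
    have hCr : C.rank ≤ r := by
      rw [hC]
      have h1 := aux_rank_add_le B (Matrix.single i j d)
      have h2 := aux_rank_std_le i j d
      omega
    have hterm : ∀ a b, ((A - C) a b)^2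
        = ((A - B) a b)^2 - (if a = i ∧ b = j then d^2 else 0) := by
      intro a b
      simp only [hC, Matrix.sub_apply, Matrix.add_apply, Matrix.single, Matrix.of_apply]
      by_cases h1 : a = i
      · by_cases h2 : b = j
        · subst h1; subst h2; simp [hd]; try ring
        · simp [h1, h2, Ne.symm h2]
      · simp [h1, Ne.symm h1]
    have hsum : ∑ a, ∑ b, ((A - C) a b)^2 = (∑ a, ∑ b, ((A - B) a b)^2) - d^2 := by
      calc ∑ a, ∑ b, ((A - C) a b)^2
          = ∑ a, ∑ b, (((A - B) a b)^2 - if a = i ∧ b = j then d^2 else 0) :=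
            Finset.sum_congr rfl fun a _ => Finset.sum_congr rfl fun b _ => hterm a b
        _ = (∑ a, ∑ b, ((A - B) a b)^2) - ∑ a, ∑ b, (if a = i ∧ b = j then d^2 else 0) := by
            simp [Finset.sum_sub_distrib]
        _ = (∑ a, ∑ b, ((A - B) a b)^2) - d^2 := by
            simp [ite_and, Finset.sum_ite_eq']
    have hdpos : 0 < d^2 := by positivity
    have hdle : d^2 ≤ ∑ a, ∑ b, ((A - B) a b)^2 := by
      have := aux_sq_entry_le (A - B) i j
      simpa [hd] using this
    have hlt2 : frobNorm (A - C) < frobNorm (A - B) := by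
      rw [frobNorm, frobNorm, hsum]
      exact Real.sqrt_lt_sqrt (by linarith) (by linarith)
    exact absurd (hmin C hCr) (not_le.2 hlt2)
end

section
/- Let m ≥ n ≥ r and let C_r be the m×n real matrix whose top-left r×r block is the identity and all other entries are zero. The linear map γ : ℝ^{m×m} × ℝ^{n×n} → ℝ^{m×n} given by γ(A, B) = A·C_r + C_r·Bᵀ has rank mn − (m−r)(n−r) = (m+n)r − r², i.e., the dimension of its range is (m+n)r − r². -/
lemma card_tail (m r : ℕ) : Fintype.card {i : Fin m // r ≤ (i : ℕ)} = m - r := by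
  rw [← Fintype.card_fin (m - r)]
  exact Fintype.card_congr
    ⟨fun i => ⟨(i : ℕ) - r, by omega⟩,
     fun k => ⟨⟨(k : ℕ) + r, by omega⟩, by simp⟩,
     fun i => by ext; simp; omega,
     fun k => by ext; simp⟩

/-- The linear map `γ(A, B) = A·C_r + C_r·Bᵀ` (with `C_r` the partial-identity canonical
form) has rank `(m+n)r − r²`. -/
theorem gamma_rank {m n r : ℕ} (hmn : n ≤ m) (hrn : r ≤ n)
    (Cr : Matrix (Fin m) (Fin n) ℝ)
    (hCr : ∀ i j, Cr i j = if (i : ℕ) = (j : ℕ) ∧ (i : ℕ) < r then 1 else 0)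
    (γ : (Matrix (Fin m) (Fin m) ℝ × Matrix (Fin n) (Fin n) ℝ) →ₗ[ℝ]
          Matrix (Fin m) (Fin n) ℝ)
    (hγ : ∀ (A : Matrix (Fin m) (Fin m) ℝ) (B : Matrix (Fin n) (Fin n) ℝ),
            γ (A, B) = A * Cr + Cr * B.transpose) :
    Module.finrank ℝ (LinearMap.range γ) = (m + n) * r - r ^ 2 := by
  classical
  have hA : ∀ (A : Matrix (Fin m) (Fin m) ℝ) (i : Fin m) (j : Fin n),
      (A * Cr) i j = if (j : ℕ) < r then A i (Fin.castLE hmn j) else 0 := by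
    intro A i j
    rw [Matrix.mul_apply]
    by_cases hj : (j : ℕ) < r
    · rw [if_pos hj, Finset.sum_eq_single (Fin.castLE hmn j)]
      · rw [hCr]; simp [hj]
      · intro b _ hb
        rw [hCr, if_neg, mul_zero]
        rintro ⟨h1, _⟩
        exact hb (Fin.ext (by simpa using h1))
      · intro h; exact absurd (Finset.mem_univ _) h
    · rw [if_neg hj]
      apply Finset.sum_eq_zero
      intro k _
      rw [hCr, if_neg, mul_zero]
      rintro ⟨h1, h2⟩; omega
  have hB : ∀ (B : Matrix (Fin n) (Fin n) ℝ) (i : Fin m) (j : Fin n),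
      (Cr * B.transpose) i j = if h : (i : ℕ) < r then B j ⟨i, h.trans_le hrn⟩ else 0 := by
    intro B i j
    rw [Matrix.mul_apply]
    by_cases hi : (i : ℕ) < r
    · rw [dif_pos hi, Finset.sum_eq_single (⟨(i : ℕ), hi.trans_le hrn⟩ : Fin n)]
      · rw [hCr]; simp [hi, Matrix.transpose_apply]
      · intro b _ hb
        rw [hCr, if_neg, zero_mul]
        rintro ⟨h1, _⟩
        exact hb (Fin.ext (by simpa using h1.symm))
      · intro h; exact absurd (Finset.mem_univ _) h
    · rw [dif_neg hi]
      apply Finset.sum_eq_zero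
      intro k _
      rw [hCr, if_neg, zero_mul]
      rintro ⟨h1, h2⟩; omega
  -- the projection onto the lower-right block
  let φ : Matrix (Fin m) (Fin n) ℝ →ₗ[ℝ]
      ({p : Fin m × Fin n // r ≤ (p.1 : ℕ) ∧ r ≤ (p.2 : ℕ)} → ℝ) :=
    { toFun := fun M p => M p.1.1 p.1.2
      map_add' := fun _ _ => rfl
      map_smul' := fun _ _ => rfl }
  have hrange : LinearMap.range γ = LinearMap.ker φ := by
    apply le_antisymm
    · rintro x ⟨⟨A, B⟩, rfl⟩
      rw [LinearMap.mem_ker]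
      funext p
      show (γ (A, B)) p.1.1 p.1.2 = 0
      rw [hγ, Matrix.add_apply, hA, hB, if_neg (not_lt.mpr p.2.2),
        dif_neg (not_lt.mpr p.2.1), add_zero]
    · intro M hM
      rw [LinearMap.mem_ker] at hM
      have hM' : ∀ (i : Fin m) (j : Fin n), r ≤ (i : ℕ) → r ≤ (j : ℕ) → M i j = 0 := by
        intro i j h1 h2
        exact congrFun hM ⟨(i, j), h1, h2⟩
      refine ⟨((Matrix.of fun i k => if h : (k : ℕ) < n then M i ⟨(k : ℕ), h⟩ else 0 :
          Matrix (Fin m) (Fin m) ℝ),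
        (Matrix.of fun j k => if h : (k : ℕ) < r then
            (if r ≤ (j : ℕ) then M ⟨(k : ℕ), lt_of_lt_of_le (h.trans_le hrn) hmn⟩ j else 0)
          else 0 : Matrix (Fin n) (Fin n) ℝ)), ?_⟩
      refine (hγ _ _).trans ?_
      funext i j
      rw [Matrix.add_apply, hA, hB]
      by_cases hj : (j : ℕ) < r
      · rw [if_pos hj]
        by_cases hi : (i : ℕ) < r
        · rw [dif_pos hi]
          simp [hj, Fin.is_lt, not_le.mpr hj]
        · rw [dif_neg hi]
          simp [Fin.is_lt]
      · rw [if_neg hj, zero_add]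
        by_cases hi : (i : ℕ) < r
        · rw [dif_pos hi]
          simp [hi, not_lt.mp hj]
        · rw [dif_neg hi]
          exact (hM' i j (not_lt.mp hi) (not_lt.mp hj)).symm
  have hsurj : Function.Surjective φ := by
    intro f
    refine ⟨fun i j => if h : r ≤ (i : ℕ) ∧ r ≤ (j : ℕ) then f ⟨(i, j), h⟩ else 0, ?_⟩
    funext p
    show (if h : _ then _ else _) = f p
    rw [dif_pos p.2]
  have hrn1 := LinearMap.finrank_range_add_finrank_ker φ
  rw [LinearMap.range_eq_top.mpr hsurj, finrank_top] at hrn1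
  have hcard : Fintype.card {p : Fin m × Fin n // r ≤ (p.1 : ℕ) ∧ r ≤ (p.2 : ℕ)} =
      (m - r) * (n - r) := by
    rw [Fintype.card_congr (Equiv.subtypeProdEquivProd
      (p := fun i : Fin m => r ≤ (i : ℕ)) (q := fun j : Fin n => r ≤ (j : ℕ)))]
    rw [Fintype.card_prod, card_tail, card_tail]
  have hcod : Module.finrank ℝ
      ({p : Fin m × Fin n // r ≤ (p.1 : ℕ) ∧ r ≤ (p.2 : ℕ)} → ℝ) = (m - r) * (n - r) := by
    rw [Module.finrank_pi, hcard]
  have hdom : Module.finrank ℝ (Matrix (Fin m) (Fin n) ℝ) = m * n := by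
    simp [Module.finrank_matrix]
  rw [hcod, hdom] at hrn1
  rw [hrange]
  obtain ⟨a, rfl⟩ : ∃ a, m = r + a := ⟨m - r, by omega⟩
  obtain ⟨b, rfl⟩ : ∃ b, n = r + b := ⟨n - r, by omega⟩
  have e1 : (r + a) * (r + b) = a * b + (r * r + r * b + a * r) := by ring
  have e2 : (r + a + (r + b)) * r = r ^ 2 + (r * r + r * b + a * r) := by ring
  simp only [Nat.add_sub_cancel_left] at hrn1 ⊢
  omega
end

section
/- The set of 2×2×2 real tensors of rank at most 2, {T : rank(T) ≤ 2}, is not a closed subset of the space of 2×2×2 real tensors with its Euclidean topology. -/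
/-- The W tensor: entries with exactly one index equal to `1` are `1`, others `0`. -/
def Wt : Tensor222 := ![![![0,1],![1,0]],![![1,0],![0,0]]]

/-- The W tensor is not a sum of two rank-one tensors. -/
lemma no_rank2 (a b c : Fin 2 → Fin 2 → ℝ)
    (h : Wt = fun i j k => ∑ l, a l i * b l j * c l k) : False := by
  have e000 := congrFun (congrFun (congrFun h 0) 0) 0
  have e001 := congrFun (congrFun (congrFun h 0) 0) 1
  have e010 := congrFun (congrFun (congrFun h 0) 1) 0
  have e011 := congrFun (congrFun (congrFun h 0) 1) 1
  have e100 := congrFun (congrFun (congrFun h 1) 0) 0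
  have e101 := congrFun (congrFun (congrFun h 1) 0) 1
  have e110 := congrFun (congrFun (congrFun h 1) 1) 0
  have e111 := congrFun (congrFun (congrFun h 1) 1) 1
  simp only [Wt, Fin.sum_univ_two, Matrix.cons_val_zero, Matrix.cons_val_one,
    Matrix.head_cons] at e000 e001 e010 e011 e100 e101 e110 e111
  set p0 := a 0 0; set p1 := a 0 1; set q0 := a 1 0; set q1 := a 1 1
  set r0 := b 0 0; set r1 := b 0 1; set s0 := b 1 0; set s1 := b 1 1
  set u0 := c 0 0; set u1 := c 0 1; set v0 := c 1 0; set v1 := c 1 1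
  set D := (p0*q1 - p1*q0) * (r0*s1 - r1*s0) with hDdef
  -- determinant of the slice k = 0
  have h1 : u0*v0*D = -1 := by
    linear_combination (-(p1*r1*u0 + q1*s1*v0)) * e000 + (p1*r0*u0 + q1*s0*v0) * e010 + e100
  -- determinant of the slice k = 1
  have h2 : u1*v1*D = 0 := by
    linear_combination (-(p1*r1*u1 + q1*s1*v1)) * e001 - e111 + (p1*r0*u1 + q1*s0*v1) * e011
  -- determinant of the sum of the slices
  have h3 : (u0+u1)*(v0+v1)*D = -1 := by
    linear_combination (-(p1*r1*u0 + q1*s1*v0 + p1*r1*u1 + q1*s1*v1)) * (e000 + e001)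
      - (e110 + e111) + (p1*r0*u0 + q1*s0*v0 + p1*r0*u1 + q1*s0*v1) * (e010 + e011)
      + (e100 + e101)
  have hD : D ≠ 0 := by intro h0; rw [h0] at h1; norm_num at h1
  have hu0 : u0 ≠ 0 := by intro h0; rw [h0] at h1; norm_num at h1
  have hv0 : v0 ≠ 0 := by intro h0; rw [h0] at h1; norm_num at h1
  have h2' : u1 * v1 = 0 := (mul_eq_zero.mp h2).resolve_right hD
  have h3' : u0*v1 + u1*v0 = 0 := by
    have h4 : (u0*v1 + u1*v0) * D = 0 := by linear_combination h3 - h1 - h2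
    exact (mul_eq_zero.mp h4).resolve_right hD
  rcases mul_eq_zero.mp h2' with h5 | h5
  · have hv1 : v1 = 0 := by
      have : u0 * v1 = 0 := by linear_combination h3' - v0 * h5
      exact (mul_eq_zero.mp this).resolve_left hu0
    rw [h5, hv1] at e001; norm_num at e001
  · have hu1 : u1 = 0 := by
      have : u1 * v0 = 0 := by linear_combination h3' - u0 * h5
      exact (mul_eq_zero.mp this).resolve_right hv0
    rw [h5, hu1] at e001; norm_num at e001

lemma Wt_not_rank_le_two : ¬ tensorRank Wt ≤ 2 := by
  intro hW
  have hne : {r : ℕ | ∃ a b c : Fin r → Fin 2 → ℝ,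
      Wt = fun i j k => ∑ l, a l i * b l j * c l k}.Nonempty := by
    refine ⟨3, ![![1,0],![1,0],![0,1]], ![![1,0],![0,1],![1,0]], ![![0,1],![1,0],![1,0]], ?_⟩
    funext i j k
    fin_cases i <;> fin_cases j <;> fin_cases k <;>
      norm_num [Wt, Fin.sum_univ_three, Matrix.vecHead, Matrix.vecTail, Matrix.cons_val_two]
  have hmem : ∃ a b c : Fin (tensorRank Wt) → Fin 2 → ℝ,
      Wt = fun i j k => ∑ l, a l i * b l j * c l k := Nat.sInf_mem hne
  revert hmem hW
  generalize tensorRank Wt = r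
  intro hW hmem
  obtain ⟨a, b, c, hdec⟩ := hmem
  interval_cases r
  · have := congrFun (congrFun (congrFun hdec 0) 0) 1
    norm_num [Wt] at this
  · refine no_rank2 ![a 0, 0] ![b 0, 0] ![c 0, 0] ?_
    rw [hdec]; funext i j k
    simp [Fin.sum_univ_two, Fin.sum_univ_one]
  · exact no_rank2 a b c hdec

/-- The set of `2 × 2 × 2` real tensors of rank at most 2 is not closed. -/
theorem rank_le_two_not_closed :
    ¬IsClosed {T : Tensor222 | tensorRank T ≤ 2} := by
  intro hclosed
  set x : ℕ → Fin 2 → ℝ := fun n => ![1, 1/(n+1)] with hx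
  set y : Fin 2 → ℝ := ![1, 0] with hy
  set T : ℕ → Tensor222 := fun n i j k =>
    (n+1 : ℝ) * (x n i * x n j * x n k) - (n+1 : ℝ) * (y i * y j * y k) with hT
  have hmem : ∀ n, T n ∈ {T : Tensor222 | tensorRank T ≤ 2} := by
    intro n
    refine Nat.sInf_le ⟨![fun i => (n+1 : ℝ) * x n i, fun i => -((n+1 : ℝ)) * y i],
      ![x n, y], ![x n, y], ?_⟩
    funext i j k
    simp only [hT, Fin.sum_univ_two, Matrix.cons_val_zero, Matrix.cons_val_one, Matrix.head_cons]
    ring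
  have htend : Filter.Tendsto T Filter.atTop (nhds Wt) := by
    rw [tendsto_pi_nhds]; intro i
    rw [tendsto_pi_nhds]; intro j
    rw [tendsto_pi_nhds]; intro k
    have hlim : Filter.Tendsto (fun n : ℕ => 1/((n:ℝ)+1)) Filter.atTop (nhds 0) :=
      tendsto_one_div_add_atTop_nhds_zero_nat
    fin_cases i <;> fin_cases j <;> fin_cases k <;>
      simp only [hT, hx, hy, Wt, Fin.mk_zero, Fin.mk_one, Matrix.cons_val_zero,
        Matrix.cons_val_one, Matrix.head_cons, Fin.isValue, mul_one, one_mul,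
        mul_zero, zero_mul, sub_zero, sub_self]
    · exact tendsto_const_nhds
    · refine Filter.Tendsto.congr (f₁ := fun _ : ℕ => (1:ℝ))
        (fun n => by field_simp) tendsto_const_nhds
    · refine Filter.Tendsto.congr (f₁ := fun _ : ℕ => (1:ℝ))
        (fun n => by field_simp) tendsto_const_nhds
    · refine Filter.Tendsto.congr (f₁ := fun n : ℕ => 1/((n:ℝ)+1))
        (fun n => by field_simp; try ring) hlim
    · refine Filter.Tendsto.congr (f₁ := fun _ : ℕ => (1:ℝ))
        (fun n => by field_simp) tendsto_const_nhds
    · refine Filter.Tendsto.congr (f₁ := fun n : ℕ => 1/((n:ℝ)+1))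
        (fun n => by field_simp; try ring) hlim
    · refine Filter.Tendsto.congr (f₁ := fun n : ℕ => 1/((n:ℝ)+1))
        (fun n => by field_simp; try ring) hlim
    · refine Filter.Tendsto.congr (f₁ := fun n : ℕ => 1/((n:ℝ)+1) * (1/((n:ℝ)+1)))
        (fun n => by field_simp; try ring) (by simpa using hlim.mul hlim)
  exact Wt_not_rank_le_two (hclosed.mem_of_tendsto htend (Filter.Eventually.of_forall hmem))
end

section
/- The orbit of the D₂′ canonical form under the multi-TTM action of invertible 2×2 matrices is contained in the closure of the orbit of the D₃ canonical form: every tensor of the form G₂′ ×₁ U ×₂ V ×₃ W with U, V, W invertible 2×2 real matrices, where G₂′ is the D₂′ canonical form (entries t111=1, t122=1, all others zero), is a limit of tensors of the form G₃' ×₁ Uₖ ×₂ Vₖ ×₃ Wₖ with Uₖ, Vₖ, Wₖ invertible, where G₃' is the D₃ canonical form (entries t111=1, t122=1, t212=1, all others zero). -/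
def Eaux : Tensor222 := ![![![0,0],![0,0]], ![![0,1],![0,0]]]

def Maux (ε : ℝ) : Matrix (Fin 2) (Fin 2) ℝ := Matrix.of ![![1,0],![0,ε]]

lemma key (U V W : Matrix (Fin 2) (Fin 2) ℝ) (ε : ℝ) (α β γ : Fin 2) :
    ttm D3 (U * Maux ε) V W α β γ
      = ttm D2' U V W α β γ + ε * ttm Eaux U V W α β γ := by
  simp [ttm, Maux, Matrix.mul_apply, Fin.sum_univ_succ, D2', D3, Eaux]
  ring

lemma contf (U V W : Matrix (Fin 2) (Fin 2) ℝ) :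
    Continuous (fun ε : ℝ => (fun α β γ =>
      ttm D2' U V W α β γ + ε * ttm Eaux U V W α β γ : Tensor222)) := by
  refine continuous_pi fun α => continuous_pi fun β => continuous_pi fun γ => ?_
  fun_prop

/-- The orbit of the `D₂′` canonical form is contained in the closure of the orbit of
the `D₃` canonical form. -/
theorem D2'_orbit_subset_closure_D3_orbit (U V W : Matrix (Fin 2) (Fin 2) ℝ)
    (hU : IsUnit U.det) (hV : IsUnit V.det) (hW : IsUnit W.det) :
    ttm D2' U V W ∈ closure {T : Tensor222 |
      ∃ U' V' W' : Matrix (Fin 2) (Fin 2) ℝ,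
        IsUnit U'.det ∧ IsUnit V'.det ∧ IsUnit W'.det ∧ T = ttm D3 U' V' W'} := by
  set f : ℝ → Tensor222 := fun ε => (fun α β γ =>
      ttm D2' U V W α β γ + ε * ttm Eaux U V W α β γ) with hf
  have h0 : f 0 = ttm D2' U V W := by
    funext α β γ; simp [hf]
  have htend : Filter.Tendsto f (nhdsWithin 0 (Set.Ioi 0)) (nhds (ttm D2' U V W)) := by
    rw [← h0]
    exact ((contf U V W).tendsto 0).mono_left nhdsWithin_le_nhds
  refine mem_closure_of_tendsto htend ?_
  filter_upwards [self_mem_nhdsWithin] with ε (hε : ε ∈ Set.Ioi 0)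
  refine ⟨U * Maux ε, V, W, ?_, hV, hW, ?_⟩
  · rw [Matrix.det_mul]
    refine hU.mul ?_
    have : (Maux ε).det = ε := by
      simp [Maux, Matrix.det_fin_two]
    rw [this]
    exact isUnit_iff_ne_zero.mpr (ne_of_gt hε)
  · funext α β γ
    rw [key]
end

section
/- The 2×2×2 real tensor C representing complex multiplication, with entries t111 = 1, t221 = −1, t122 = 1, t212 = 1 and all other entries zero, has rank 3. -/
/-- The complex-multiplication tensor: `t111 = 1, t221 = −1, t122 = 1, t212 = 1`. -/
def complexMulTensor : Tensor222 := ![![![1, 0], ![0, 1]], ![![0, 1], ![-1, 0]]]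

/-- The `2 × 2 × 2` tensor representing complex multiplication has rank 3. -/
theorem complexMulTensor_rank_eq_three : tensorRank complexMulTensor = 3 := by
  have hmem : (3:ℕ) ∈ {r : ℕ | ∃ a b c : Fin r → Fin 2 → ℝ,
      complexMulTensor = fun i j k => ∑ l, a l i * b l j * c l k} := by
    refine ⟨![![1,0],![0,1],![1,1]], ![![1,0],![0,1],![1,1]], ![![1,-1],![-1,-1],![0,1]], ?_⟩
    funext i j k
    fin_cases i <;> fin_cases j <;> fin_cases k <;>
      norm_num [complexMulTensor, Fin.sum_univ_three, Matrix.vecHead, Matrix.vecTail, Matrix.cons_val_two]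
  refine le_antisymm (Nat.sInf_le hmem) (le_csInf ⟨3, hmem⟩ ?_)
  rintro m ⟨a, b, c, h⟩
  by_contra hm
  push_neg at hm
  interval_cases m
  · -- m = 0 : the empty sum is 0, but the tensor is nonzero
    have e000 := congrFun (congrFun (congrFun h 0) 0) 0
    simp [complexMulTensor] at e000
  · -- m = 1 : a rank-one tensor has all 2×2 slices singular
    have e000 := congrFun (congrFun (congrFun h 0) 0) 0
    have e110 := congrFun (congrFun (congrFun h 1) 1) 0
    have e010 := congrFun (congrFun (congrFun h 0) 1) 0
    have e100 := congrFun (congrFun (congrFun h 1) 0) 0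
    simp [complexMulTensor, Fin.sum_univ_one] at e000 e110 e010 e100
    rcases e010 with (h' | h') | h'
    · simp [h'] at e000
    · simp [h'] at e110
    · simp [h'] at e000
  · -- m = 2 : the determinant of the pencil x·M₀ + y·M₁ would factor over ℝ
    have e000 := congrFun (congrFun (congrFun h 0) 0) 0
    have e010 := congrFun (congrFun (congrFun h 0) 1) 0
    have e100 := congrFun (congrFun (congrFun h 1) 0) 0
    have e110 := congrFun (congrFun (congrFun h 1) 1) 0
    have e001 := congrFun (congrFun (congrFun h 0) 0) 1
    have e011 := congrFun (congrFun (congrFun h 0) 1) 1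
    have e101 := congrFun (congrFun (congrFun h 1) 0) 1
    have e111 := congrFun (congrFun (congrFun h 1) 1) 1
    simp [complexMulTensor, Fin.sum_univ_two] at e000 e010 e100 e110 e001 e011 e101 e111
    have h1 : c 0 0 * c 1 0 * ((a 0 0 * a 1 1 - a 0 1 * a 1 0) *
        (b 0 0 * b 1 1 - b 0 1 * b 1 0)) = -1 := by
      linear_combination (-(a 0 1 * b 0 1 * c 0 0 + a 1 1 * b 1 1 * c 1 0)) * e000 - e110 +
        (a 0 1 * b 0 0 * c 0 0 + a 1 1 * b 1 0 * c 1 0) * e010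
    have h2 : c 0 1 * c 1 1 * ((a 0 0 * a 1 1 - a 0 1 * a 1 0) *
        (b 0 0 * b 1 1 - b 0 1 * b 1 0)) = -1 := by
      linear_combination (-(a 0 1 * b 0 1 * c 0 1 + a 1 1 * b 1 1 * c 1 1)) * e001 +
        (a 0 1 * b 0 0 * c 0 1 + a 1 1 * b 1 0 * c 1 1) * e011 + e101
    have h3 : c 0 0 * c 1 1 * ((a 0 0 * a 1 1 - a 0 1 * a 1 0) *
          (b 0 0 * b 1 1 - b 0 1 * b 1 0)) +
        c 0 1 * c 1 0 * ((a 0 0 * a 1 1 - a 0 1 * a 1 0) *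
          (b 0 0 * b 1 1 - b 0 1 * b 1 0)) = 0 := by
      linear_combination (-(a 0 1 * b 0 1 * c 0 1 + a 1 1 * b 1 1 * c 1 1)) * e000 - e111 -
        (a 0 1 * b 0 1 * c 0 0 + a 1 1 * b 1 1 * c 1 0) * e001 +
        (a 0 1 * b 0 0 * c 0 1 + a 1 1 * b 1 0 * c 1 1) * e010 +
        (a 0 1 * b 0 0 * c 0 0 + a 1 1 * b 1 0 * c 1 0) * e011 + e100
    set P := c 0 0 * c 1 1 * ((a 0 0 * a 1 1 - a 0 1 * a 1 0) *
      (b 0 0 * b 1 1 - b 0 1 * b 1 0)) with hP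
    set Q := c 0 1 * c 1 0 * ((a 0 0 * a 1 1 - a 0 1 * a 1 0) *
      (b 0 0 * b 1 1 - b 0 1 * b 1 0)) with hQ
    have hpq : P * Q = 1 := by
      rw [hP, hQ]
      linear_combination (c 0 1 * c 1 1 * ((a 0 0 * a 1 1 - a 0 1 * a 1 0) *
        (b 0 0 * b 1 1 - b 0 1 * b 1 0))) * h1 - h2
    nlinarith [hpq, h3, sq_nonneg (P - Q), sq_nonneg (P + Q)]
end
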